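/- arXiv:1710.03514 — 2 statements merged into one kernel-verified Lean document; each statement's English description precedes it below -/
import Mathlib

section
/- Let λ₁ be a special symplectic partition of 2n₁ and λ₂ a special orthogonal partition of 2n₂ with n₁ + n₂ = n. Let ξ be the sequence equal to 1 on J^+, −1 on J^-, and 0 elsewhere (J^± defined from λ₁, λ₂ as in the endoscopic induction). Then λ = λ₁ + λ₂ + ξ (termwise) is a symplectic partition of 2n. -/
/-!
Call an index good when `λ₁` is even and `λ₂` odd there; since both partitions are special,
goodness is a property of the pairs `{2k+1, 2k+2}`. On a good pair, `ξ` takes the values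
`1 - carry k` and `carry (k+1) - 1`, where `carry k ∈ {0, 1}` records that `2k+1` is good and
`(λ₁, λ₂)` does not change from `2k` to `2k+1`. Hence `∑ ξ` telescopes to `0`, and
`|λ| = |λ₁| + |λ₂|`.

An odd part `i` of `λ` only occurs where `ξ = 0`, so its indices form an interval `[a, b]` on
which `λ₁` and `λ₂` are constant. If `λ₁` is odd there, then `λ₂` is even, and neither partition
splits a pair `{2k+1, 2k+2}` with such parts: otherwise the level set of that part, of even size
since `λ₁` is symplectic and `λ₂` orthogonal, would start at an even index `2m+2`, and by
specialness the pair `{2m+1, 2m+2}` would be split at a larger part of the same parity. So `a`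
is odd and `b` is even. If `λ₁` is even there, `ξ = 0` says that `(λ₁, λ₂)` does not drop into
an odd index or out of an even one, so `a` is even and `b` is odd. Either way the multiplicity
`b - a + 1` of `i` is even.
-/

open Classical

noncomputable section

/-- A partition: weakly decreasing on indices `j ≥ 1` (parts are `l 1 ≥ l 2 ≥ ...`). -/
def IsPartition (l : ℕ → ℕ) : Prop := ∀ j, 1 ≤ j → l (j + 1) ≤ l j

/-- The parts vanish eventually (finitely many nonzero parts). -/
def EventuallyZero (l : ℕ → ℕ) : Prop := ∃ N, ∀ j, N ≤ j → l j = 0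

/-- Multiplicity of `i` as a part of `l`. -/
def mult (l : ℕ → ℕ) (i : ℕ) : ℕ := Nat.card {j : ℕ | 1 ≤ j ∧ l j = i}

/-- The sum of the parts of `l`. -/
def psum (l : ℕ → ℕ) : ℕ := ∑ᶠ j : ℕ, l (j + 1)

/-- Symplectic: every odd part occurs with even multiplicity. -/
def IsSymplectic (l : ℕ → ℕ) : Prop := ∀ i, Odd i → Even (mult l i)

/-- Orthogonal: every even positive part occurs with even multiplicity. -/
def IsOrthogonal (l : ℕ → ℕ) : Prop := ∀ i, 0 < i → Even i → Even (mult l i)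

/-- Special: `l (2j-1)` and `l (2j)` have the same parity for all `j ≥ 1`. -/
def IsSpecial (l : ℕ → ℕ) : Prop := ∀ j, 1 ≤ j → l (2 * j - 1) % 2 = l (2 * j) % 2

/-- `P^+(λ)`: odd `j` with `λ_j` even and `λ_{j-1} > λ_j` (convention `λ_0 = ∞`). -/
def Pplus (l : ℕ → ℕ) : Set ℕ := {j | Odd j ∧ Even (l j) ∧ (j = 1 ∨ l (j - 1) > l j)}

/-- `P^-(λ)`: even `j ≥ 2` with `λ_j` even and `λ_j > λ_{j+1}`. -/
def Pminus (l : ℕ → ℕ) : Set ℕ := {j | 2 ≤ j ∧ Even j ∧ Even (l j) ∧ l j > l (j + 1)}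

/-- `Q^+(λ)`: even `j ≥ 2` with `λ_j` odd and `λ_{j-1} > λ_j`. -/
def Qplus (l : ℕ → ℕ) : Set ℕ := {j | 2 ≤ j ∧ Even j ∧ Odd (l j) ∧ l (j - 1) > l j}

/-- `Q^-(λ)`: odd `j ≥ 1` with `λ_j` odd and `λ_j > λ_{j+1}`. -/
def Qminus (l : ℕ → ℕ) : Set ℕ := {j | Odd j ∧ Odd (l j) ∧ l j > l (j + 1)}

/-- Orthogonal version of `P^+`: odd `j` with `λ_j` odd and `λ_{j-1} > λ_j` (`λ_0 = ∞`). -/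
def PplusO (l : ℕ → ℕ) : Set ℕ := {j | Odd j ∧ Odd (l j) ∧ (j = 1 ∨ l (j - 1) > l j)}

/-- Orthogonal version of `P^-`: even `j ≥ 2` with `λ_j` odd and `λ_j > λ_{j+1}`. -/
def PminusO (l : ℕ → ℕ) : Set ℕ := {j | 2 ≤ j ∧ Even j ∧ Odd (l j) ∧ l j > l (j + 1)}

/-- The sequence `s(λ)`: `1` on `Q^+`, `-1` on `Q^-`, `0` elsewhere. -/
def sSeq (l : ℕ → ℕ) (j : ℕ) : ℤ :=
  if j ∈ Qplus l then 1 else if j ∈ Qminus l then -1 else 0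

/-- The sequence `ζ(λ)`: `1` on `P^+`, `-1` on `P^-`, `0` elsewhere. -/
def zSeq (l : ℕ → ℕ) (j : ℕ) : ℤ :=
  if j ∈ Pplus l then 1 else if j ∈ Pminus l then -1 else 0

/-- Orthogonal `ζ(λ)`: `1` on `PplusO`, `-1` on `PminusO`, `0` elsewhere. -/
def zSeqO (l : ℕ → ℕ) (j : ℕ) : ℤ :=
  if j ∈ PplusO l then 1 else if j ∈ PminusO l then -1 else 0

/-- `sp(λ) = λ + s(λ)` (termwise, truncated to ℕ). -/
def spPart (l : ℕ → ℕ) (j : ℕ) : ℕ := ((l j : ℤ) + sSeq l j).toNat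

/-- Dominance order on partitions. -/
def Dom (l m : ℕ → ℕ) : Prop :=
  ∀ k, ∑ j ∈ Finset.range k, l (j + 1) ≤ ∑ j ∈ Finset.range k, m (j + 1)

/-- `j_min(i)`: smallest index `j ≥ 1` with `l j = i`. -/
def jminPart (l : ℕ → ℕ) (i : ℕ) : ℕ := sInf {j | 1 ≤ j ∧ l j = i}

/-- `j_max(i)`: largest index `j ≥ 1` with `l j = i`. -/
def jmaxPart (l : ℕ → ℕ) (i : ℕ) : ℕ := sSup {j | 1 ≤ j ∧ l j = i}

/-- `iSeq 1 > iSeq 2 > ... > iSeq t` enumerates the even positive parts of odd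
multiplicity of the symplectic partition `l`, completed by a final `0` if their
number is odd (so that `t` is even). -/
def MarkedSeq (l : ℕ → ℕ) (iSeq : ℕ → ℕ) (t : ℕ) : Prop :=
  Even t ∧
  (∀ h h', 1 ≤ h → h < h' → h' ≤ t → iSeq h' < iSeq h) ∧
  (∀ h, 1 ≤ h → h ≤ t → Even (iSeq h)) ∧
  (∀ h, 1 ≤ h → h ≤ t → iSeq h ≠ 0 → Odd (mult l (iSeq h))) ∧
  (∀ i, 0 < i → Even i → Odd (mult l i) → ∃ h, 1 ≤ h ∧ h ≤ t ∧ iSeq h = i)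

/-- Orthogonal analogue: `iSeq` enumerates the odd parts of odd multiplicity. -/
def MarkedSeqO (l : ℕ → ℕ) (iSeq : ℕ → ℕ) (t : ℕ) : Prop :=
  Even t ∧
  (∀ h h', 1 ≤ h → h < h' → h' ≤ t → iSeq h' < iSeq h) ∧
  (∀ h, 1 ≤ h → h ≤ t → Odd (iSeq h)) ∧
  (∀ h, 1 ≤ h → h ≤ t → Odd (mult l (iSeq h))) ∧
  (∀ i, Odd i → Odd (mult l i) → ∃ h, 1 ≤ h ∧ h ≤ t ∧ iSeq h = i)

/-- `i` lies in the range `[i_{2h}, i_{2h-1}]` for some `h`. -/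
def InRange (iSeq : ℕ → ℕ) (t : ℕ) (i : ℕ) : Prop :=
  ∃ h, 1 ≤ h ∧ 2 * h ≤ t ∧ iSeq (2 * h) ≤ i ∧ i ≤ iSeq (2 * h - 1)

/-- Intervals of a (special symplectic) partition `l`, relative to the marked
sequence `iSeq` of length `t`. -/
def IsItv (l : ℕ → ℕ) (iSeq : ℕ → ℕ) (t : ℕ) (Δ : Set ℕ) : Prop :=
  (∃ h, 1 ≤ h ∧ 2 * h ≤ t ∧
      Δ = {i | (i = 0 ∨ 0 < mult l i) ∧ iSeq (2 * h) ≤ i ∧ i ≤ iSeq (2 * h - 1)}) ∨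
  (∃ i, Even i ∧ (i = 0 ∨ 0 < mult l i) ∧ ¬ InRange iSeq t i ∧ Δ = {i})

/-- Intervals of a (special orthogonal, even) partition `l`. -/
def IsItvO (l : ℕ → ℕ) (iSeq : ℕ → ℕ) (t : ℕ) (Δ : Set ℕ) : Prop :=
  (∃ h, 1 ≤ h ∧ 2 * h ≤ t ∧
      Δ = {i | 0 < mult l i ∧ iSeq (2 * h) ≤ i ∧ i ≤ iSeq (2 * h - 1)}) ∨
  (∃ i, Odd i ∧ 0 < mult l i ∧ ¬ InRange iSeq t i ∧ Δ = {i})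

/-- `J(Δ)`: the set of indices `j ≥ 1` whose part lies in `Δ`. -/
def idxSet (l : ℕ → ℕ) (Δ : Set ℕ) : Set ℕ := {j | 1 ≤ j ∧ l j ∈ Δ}

/-- Good parity at index `j`: `λ_{1,j}` even and `λ_{2,j}` odd. -/
def GoodIdx (l₁ l₂ : ℕ → ℕ) (j : ℕ) : Prop := Even (l₁ j) ∧ Odd (l₂ j)

/-- `J^+`: odd `j` of good parity with a strict decrease at `j-1 → j` for some `d`. -/
def Jplus (l₁ l₂ : ℕ → ℕ) : Set ℕ :=
  {j | Odd j ∧ GoodIdx l₁ l₂ j ∧ (j = 1 ∨ l₁ (j - 1) > l₁ j ∨ l₂ (j - 1) > l₂ j)}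

/-- `J^-`: even `j` of good parity with a strict decrease at `j → j+1` for some `d`. -/
def Jminus (l₁ l₂ : ℕ → ℕ) : Set ℕ :=
  {j | 2 ≤ j ∧ Even j ∧ GoodIdx l₁ l₂ j ∧ (l₁ j > l₁ (j + 1) ∨ l₂ j > l₂ (j + 1))}

/-- The sequence `ξ`: `1` on `J^+`, `-1` on `J^-`, `0` elsewhere. -/
def xiSeq (l₁ l₂ : ℕ → ℕ) (j : ℕ) : ℤ :=
  if j ∈ Jplus l₁ l₂ then 1 else if j ∈ Jminus l₁ l₂ then -1 else 0

/-- The endoscopic induction `λ = λ₁ + λ₂ + ξ` (termwise, truncated to ℕ). -/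
def indPart (l₁ l₂ : ℕ → ℕ) (j : ℕ) : ℕ := ((l₁ j : ℤ) + (l₂ j : ℤ) + xiSeq l₁ l₂ j).toNat

open Finset

section Partition

variable {l : ℕ → ℕ}

theorem IsPartition.antitoneOn (hp : IsPartition l) : AntitoneOn l (Set.Ici 1) :=
  antitoneOn_nat_Ici_of_succ_le hp

theorem IsPartition.le_of_le (hp : IsPartition l) {j j' : ℕ} (hj : 1 ≤ j) (h : j ≤ j') :
    l j' ≤ l j :=
  hp.antitoneOn hj (hj.trans h) h

theorem IsPartition.exists_eq_Icc (hp : IsPartition l) (hz : EventuallyZero l) {i j : ℕ}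
    (hi : 0 < i) (hj : 1 ≤ j) (hl : l j = i) :
    ∃ a b, 1 ≤ a ∧ a ≤ b ∧ {j | 1 ≤ j ∧ l j = i} = Set.Icc a b := by
  obtain ⟨N, hN⟩ := hz
  set S := {j | 1 ≤ j ∧ l j = i}
  have hjS : j ∈ S := ⟨hj, hl⟩
  have hne : S.Nonempty := ⟨j, hjS⟩
  have hbdd : BddAbove S := ⟨N, fun j' ⟨_, hj'⟩ => by
    by_contra h
    have := hN j' (by omega)
    omega⟩
  have ha : 1 ≤ sInf S := (Nat.sInf_mem hne).1
  refine ⟨sInf S, sSup S, ha, (Nat.sInf_le hjS).trans (le_csSup hbdd hjS), ?_⟩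
  ext j'
  refine ⟨fun h => ⟨Nat.sInf_le h, le_csSup hbdd h⟩, fun ⟨h₁, h₂⟩ => ⟨ha.trans h₁, ?_⟩⟩
  have := hp.le_of_le ha h₁
  have := hp.le_of_le (ha.trans h₁) h₂
  have := (Nat.sInf_mem hne).2
  have := (Nat.sSup_mem hne hbdd).2
  omega

theorem mult_eq_of_eq_Icc {i a b : ℕ} (h : {j | 1 ≤ j ∧ l j = i} = Set.Icc a b) :
    mult l i = b + 1 - a := by
  rw [mult, h, ← coe_Icc, Nat.card_coe_set_eq, Set.ncard_coe_finset, Nat.card_Icc]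

theorem psum_eq_sum_range {N : ℕ} (h : ∀ j, N < j → l j = 0) :
    psum l = ∑ j ∈ range N, l (j + 1) :=
  finsum_eq_sum_of_support_subset _ fun j hj => by
    simp only [coe_range, Set.mem_Iio]
    by_contra hjN
    exact hj (h (j + 1) (by omega))

theorem IsSpecial.mod_two_eq (hspec : IsSpecial l) (k : ℕ) :
    l (2 * k + 1) % 2 = l (2 * k + 2) % 2 :=
  hspec (k + 1) (by omega)

theorem IsSpecial.pair_eq (hspec : IsSpecial l) (hp : IsPartition l) (hz : EventuallyZero l)
    {r : ℕ} (hmult : ∀ v, 0 < v → v % 2 = r → Even (mult l v)) (k : ℕ)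
    (hr : l (2 * k + 1) % 2 = r) : l (2 * k + 2) = l (2 * k + 1) := by
  induction k using Nat.strong_induction_on with
  | _ k ih =>
  have hle : l (2 * k + 2) ≤ l (2 * k + 1) := hp (2 * k + 1) (by omega)
  by_contra hne
  obtain ⟨a, b, ha, hab, hS⟩ := hp.exists_eq_Icc hz (by omega) (j := 2 * k + 1) (by omega) rfl
  have mem : ∀ j, j ∈ Set.Icc a b ↔ 1 ≤ j ∧ l j = l (2 * k + 1) := fun j => by rw [← hS]; rfl
  obtain ⟨hak, hkb⟩ := (mem (2 * k + 1)).2 ⟨by omega, rfl⟩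
  have hb : b = 2 * k + 1 := by
    have hlb := ((mem b).1 ⟨hab, le_rfl⟩).2
    have : ¬ 2 * k + 2 ≤ b := fun h => by have := hp.le_of_le (by omega) h; omega
    omega
  -- the level set has even size and ends at `2k+1`, so it starts at an even index `2m+2`
  obtain ⟨m, rfl⟩ : ∃ m, a = 2 * m + 2 := by
    have := Nat.even_iff.1 (hmult _ (by omega) hr)
    rw [mult_eq_of_eq_Icc hS, hb] at this
    exact ⟨a / 2 - 1, by omega⟩
  have hla := ((mem (2 * m + 2)).1 ⟨le_rfl, hab⟩).2
  have hgt : l (2 * k + 1) < l (2 * m + 1) := by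
    have := hp.le_of_le (j := 2 * m + 1) (by omega) (by omega : 2 * m + 1 ≤ 2 * m + 2)
    have : l (2 * m + 1) ≠ l (2 * k + 1) := fun h => by
      have := ((mem _).2 ⟨by omega, h⟩).1
      omega
    omega
  have := ih m (by omega) (by have := hspec.mod_two_eq m; omega)
  omega

end Partition

section Induction

variable {l₁ l₂ : ℕ → ℕ}

def Carries (l₁ l₂ : ℕ → ℕ) (k : ℕ) : Prop :=
  1 ≤ k ∧ GoodIdx l₁ l₂ (2 * k + 1) ∧ l₁ (2 * k) = l₁ (2 * k + 1) ∧ l₂ (2 * k) = l₂ (2 * k + 1)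

def carry (l₁ l₂ : ℕ → ℕ) (k : ℕ) : ℤ := if Carries l₁ l₂ k then 1 else 0

theorem goodIdx_iff_mod_two {j : ℕ} : GoodIdx l₁ l₂ j ↔ l₁ j % 2 = 0 ∧ l₂ j % 2 = 1 := by
  rw [GoodIdx, Nat.even_iff, Nat.odd_iff]

theorem xiSeq_eq_zero_of_not_goodIdx {j : ℕ} (h : ¬ GoodIdx l₁ l₂ j) : xiSeq l₁ l₂ j = 0 := by
  simp [xiSeq, Jplus, Jminus, h]

theorem xiSeq_odd_of_goodIdx (hp1 : IsPartition l₁) (hp2 : IsPartition l₂) {k : ℕ}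
    (h : GoodIdx l₁ l₂ (2 * k + 1)) : xiSeq l₁ l₂ (2 * k + 1) = 1 - carry l₁ l₂ k := by
  rcases k with _ | k
  · simp [xiSeq, carry, Carries, Jplus, h]
  have : l₁ (2 * k + 3) ≤ l₁ (2 * k + 2) := hp1 _ (by omega)
  have : l₂ (2 * k + 3) ≤ l₂ (2 * k + 2) := hp2 _ (by omega)
  simp only [xiSeq, carry, Carries, Jplus, Jminus, goodIdx_iff_mod_two, Set.mem_ofPred_eq,
    mul_add, mul_one, add_assoc, Nat.reduceAdd, Nat.odd_iff, Nat.even_iff,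
    show 2 * k + 3 - 1 = 2 * k + 2 from rfl] at h ⊢
  split_ifs <;> omega

theorem xiSeq_even_of_goodIdx (hp1 : IsPartition l₁) (hp2 : IsPartition l₂) {k : ℕ}
    (h : GoodIdx l₁ l₂ (2 * k + 2)) : xiSeq l₁ l₂ (2 * k + 2) = carry l₁ l₂ (k + 1) - 1 := by
  have : l₁ (2 * k + 3) ≤ l₁ (2 * k + 2) := hp1 _ (by omega)
  have : l₂ (2 * k + 3) ≤ l₂ (2 * k + 2) := hp2 _ (by omega)
  simp only [xiSeq, carry, Carries, Jplus, Jminus, goodIdx_iff_mod_two, Set.mem_ofPred_eq,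
    mul_add, mul_one, add_assoc, Nat.reduceAdd, Nat.odd_iff, Nat.even_iff] at h ⊢
  split_ifs <;> omega

theorem goodIdx_pair_iff (hspec1 : IsSpecial l₁) (hspec2 : IsSpecial l₂) (k : ℕ) :
    GoodIdx l₁ l₂ (2 * k + 1) ↔ GoodIdx l₁ l₂ (2 * k + 2) := by
  rw [goodIdx_iff_mod_two, goodIdx_iff_mod_two, hspec1.mod_two_eq, hspec2.mod_two_eq]

theorem Carries.goodIdx {k : ℕ} (h : Carries l₁ l₂ (k + 1)) : GoodIdx l₁ l₂ (2 * k + 2) := by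
  obtain ⟨-, hg, h₁, h₂⟩ := h
  rw [goodIdx_iff_mod_two] at hg ⊢
  exact ⟨h₁ ▸ hg.1, h₂ ▸ hg.2⟩

theorem xiSeq_add_xiSeq (hp1 : IsPartition l₁) (hp2 : IsPartition l₂) (hspec1 : IsSpecial l₁)
    (hspec2 : IsSpecial l₂) (k : ℕ) :
    xiSeq l₁ l₂ (2 * k + 1) + xiSeq l₁ l₂ (2 * k + 2) = carry l₁ l₂ (k + 1) - carry l₁ l₂ k := by
  by_cases hg : GoodIdx l₁ l₂ (2 * k + 1)
  · rw [xiSeq_odd_of_goodIdx hp1 hp2 hg,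
      xiSeq_even_of_goodIdx hp1 hp2 ((goodIdx_pair_iff hspec1 hspec2 k).1 hg)]
    ring
  · have hg' := mt (goodIdx_pair_iff hspec1 hspec2 k).2 hg
    rw [xiSeq_eq_zero_of_not_goodIdx hg, xiSeq_eq_zero_of_not_goodIdx hg', carry, carry,
      if_neg fun h => hg' h.goodIdx, if_neg fun h => hg h.2.1]
    rfl

theorem sum_range_xiSeq (hp1 : IsPartition l₁) (hp2 : IsPartition l₂) (hspec1 : IsSpecial l₁)
    (hspec2 : IsSpecial l₂) (K : ℕ) :
    ∑ j ∈ range (2 * K), xiSeq l₁ l₂ (j + 1) = carry l₁ l₂ K := by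
  induction K with
  | zero => simp [carry, Carries]
  | succ K ih =>
    rw [mul_add, mul_one, sum_range_succ, sum_range_succ, ih, add_assoc,
      xiSeq_add_xiSeq hp1 hp2 hspec1 hspec2]
    ring

theorem add_xiSeq_nonneg (j : ℕ) : 0 ≤ (l₁ j : ℤ) + l₂ j + xiSeq l₁ l₂ j := by
  simp only [xiSeq, Jminus, goodIdx_iff_mod_two, Set.mem_ofPred_eq]
  split_ifs <;> omega

theorem indPart_cast (j : ℕ) : (indPart l₁ l₂ j : ℤ) = l₁ j + l₂ j + xiSeq l₁ l₂ j :=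
  Int.toNat_of_nonneg (add_xiSeq_nonneg j)

theorem indPart_eq_zero {j : ℕ} (h₁ : l₁ j = 0) (h₂ : l₂ j = 0) : indPart l₁ l₂ j = 0 := by
  rw [indPart, h₁, h₂, xiSeq_eq_zero_of_not_goodIdx (by simp [goodIdx_iff_mod_two, h₂])]
  rfl

theorem eventuallyZero_indPart (hz1 : EventuallyZero l₁) (hz2 : EventuallyZero l₂) :
    EventuallyZero (indPart l₁ l₂) := by
  obtain ⟨N₁, hN₁⟩ := hz1
  obtain ⟨N₂, hN₂⟩ := hz2
  exact ⟨N₁ + N₂, fun j hj => indPart_eq_zero (hN₁ j (by omega)) (hN₂ j (by omega))⟩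

theorem psum_indPart (hp1 : IsPartition l₁) (hz1 : EventuallyZero l₁) (hspec1 : IsSpecial l₁)
    (hp2 : IsPartition l₂) (hz2 : EventuallyZero l₂) (hspec2 : IsSpecial l₂) :
    psum (indPart l₁ l₂) = psum l₁ + psum l₂ := by
  obtain ⟨N₁, hN₁⟩ := hz1
  obtain ⟨N₂, hN₂⟩ := hz2
  have h₁ : ∀ j, 2 * (N₁ + N₂) < j → l₁ j = 0 := fun j hj => hN₁ j (by omega)
  have h₂ : ∀ j, 2 * (N₁ + N₂) < j → l₂ j = 0 := fun j hj => hN₂ j (by omega)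
  have hK : carry l₁ l₂ (N₁ + N₂) = 0 := if_neg fun h => by
    have := (goodIdx_iff_mod_two.1 h.2.1).2
    rw [h₂ _ (by omega)] at this
    omega
  rw [psum_eq_sum_range h₁, psum_eq_sum_range h₂,
    psum_eq_sum_range fun j hj => indPart_eq_zero (h₁ j hj) (h₂ j hj)]
  apply @Nat.cast_injective ℤ
  push_cast
  simp only [indPart_cast, sum_add_distrib, sum_range_xiSeq hp1 hp2 hspec1 hspec2, hK, add_zero]

theorem isPartition_indPart (hp1 : IsPartition l₁) (hp2 : IsPartition l₂) :
    IsPartition (indPart l₁ l₂) := by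
  intro j hj
  have := hp1 j hj
  have := hp2 j hj
  rw [← Nat.cast_le (α := ℤ), indPart_cast, indPart_cast]
  -- `ξ` rises by one only at a strict drop of `λ₁` or `λ₂`; if it rises by two, parity makes
  -- that drop at least `2`
  simp only [xiSeq, Jplus, Jminus, goodIdx_iff_mod_two, Set.mem_ofPred_eq, Nat.odd_iff,
    Nat.even_iff, Nat.add_sub_cancel]
  split_ifs <;> omega

end Induction

section Symplectic

variable {l₁ l₂ : ℕ → ℕ}

theorem xiSeq_eq_zero_of_odd {j : ℕ} (h : Odd (indPart l₁ l₂ j)) : xiSeq l₁ l₂ j = 0 := by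
  have hcast := indPart_cast (l₁ := l₁) (l₂ := l₂) j
  rw [Nat.odd_iff] at h
  simp only [xiSeq, Jplus, Jminus, goodIdx_iff_mod_two, Set.mem_ofPred_eq] at hcast ⊢
  split_ifs at hcast ⊢ <;> omega

theorem indPart_eq_of_carries (hp1 : IsPartition l₁) (hp2 : IsPartition l₂) {k : ℕ}
    (h : Carries l₁ l₂ (k + 1)) : indPart l₁ l₂ (2 * k + 3) = indPart l₁ l₂ (2 * k + 2) := by
  have hc : carry l₁ l₂ (k + 1) = 1 := if_pos h
  have hodd := xiSeq_odd_of_goodIdx hp1 hp2 h.2.1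
  have heven := xiSeq_even_of_goodIdx hp1 hp2 h.goodIdx
  obtain ⟨-, -, h₁, h₂⟩ := h
  simp only [indPart]
  rw [show 2 * k + 3 = 2 * (k + 1) + 1 from rfl, hodd, heven, hc, ← h₁, ← h₂]
  rfl

theorem indPart_pair_eq {k : ℕ} (e₁ : l₁ (2 * k + 2) = l₁ (2 * k + 1))
    (e₂ : l₂ (2 * k + 2) = l₂ (2 * k + 1)) (h₁ : l₁ (2 * k + 1) % 2 = 1) :
    indPart l₁ l₂ (2 * k + 2) = indPart l₁ l₂ (2 * k + 1) := by
  have hg : ¬ GoodIdx l₁ l₂ (2 * k + 1) := by rw [goodIdx_iff_mod_two]; omega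
  have hg' : ¬ GoodIdx l₁ l₂ (2 * k + 2) := by rw [goodIdx_iff_mod_two, e₁]; omega
  rw [indPart, indPart, e₁, e₂, xiSeq_eq_zero_of_not_goodIdx hg, xiSeq_eq_zero_of_not_goodIdx hg']

theorem indPart_pred_eq (hp1 : IsPartition l₁) (hp2 : IsPartition l₂) (hspec1 : IsSpecial l₁)
    (hspec2 : IsSpecial l₂)
    (hpair1 : ∀ k, l₁ (2 * k + 1) % 2 = 1 → l₁ (2 * k + 2) = l₁ (2 * k + 1))
    (hpair2 : ∀ k, l₂ (2 * k + 1) % 2 = 0 → l₂ (2 * k + 2) = l₂ (2 * k + 1))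
    {j : ℕ} (hodd : Odd (indPart l₁ l₂ (j + 1))) (hpar : (j + 1) % 2 ≠ l₁ (j + 1) % 2) :
    1 ≤ j ∧ indPart l₁ l₂ j = indPart l₁ l₂ (j + 1) := by
  have hξ := xiSeq_eq_zero_of_odd hodd
  have hcast := indPart_cast (l₁ := l₁) (l₂ := l₂) (j + 1)
  rw [Nat.odd_iff] at hodd
  obtain ⟨k, rfl | rfl⟩ : ∃ k, j = 2 * k ∨ j = 2 * k + 1 := ⟨j / 2, by omega⟩
  · have hg : GoodIdx l₁ l₂ (2 * k + 1) := by rw [goodIdx_iff_mod_two]; omega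
    have hc : Carries l₁ l₂ k := by
      by_contra hc
      have := xiSeq_odd_of_goodIdx hp1 hp2 hg
      rw [carry, if_neg hc] at this
      omega
    obtain ⟨k, rfl⟩ : ∃ k', k = k' + 1 := ⟨k - 1, by have := hc.1; omega⟩
    exact ⟨by omega, (indPart_eq_of_carries hp1 hp2 hc).symm⟩
  · rw [show 2 * k + 1 + 1 = 2 * k + 2 from rfl] at hpar hcast hodd hξ
    have h₁ : l₁ (2 * k + 1) % 2 = 1 := by have := hspec1.mod_two_eq k; omega
    have h₂ : l₂ (2 * k + 1) % 2 = 0 := by have := hspec2.mod_two_eq k; omega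
    exact ⟨by omega, (indPart_pair_eq (hpair1 k h₁) (hpair2 k h₂) h₁).symm⟩

theorem indPart_succ_eq (hp1 : IsPartition l₁) (hp2 : IsPartition l₂)
    (hpair1 : ∀ k, l₁ (2 * k + 1) % 2 = 1 → l₁ (2 * k + 2) = l₁ (2 * k + 1))
    (hpair2 : ∀ k, l₂ (2 * k + 1) % 2 = 0 → l₂ (2 * k + 2) = l₂ (2 * k + 1))
    {j : ℕ} (hj : 1 ≤ j) (hodd : Odd (indPart l₁ l₂ j)) (hpar : j % 2 = l₁ j % 2) :
    indPart l₁ l₂ (j + 1) = indPart l₁ l₂ j := by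
  have hξ := xiSeq_eq_zero_of_odd hodd
  have hcast := indPart_cast (l₁ := l₁) (l₂ := l₂) j
  rw [Nat.odd_iff] at hodd
  obtain ⟨k, rfl | rfl⟩ : ∃ k, j = 2 * k + 1 ∨ j = 2 * k + 2 := ⟨(j - 1) / 2, by omega⟩
  · have h₁ : l₁ (2 * k + 1) % 2 = 1 := by omega
    exact indPart_pair_eq (hpair1 k h₁) (hpair2 k (by omega)) h₁
  · have hg : GoodIdx l₁ l₂ (2 * k + 2) := by rw [goodIdx_iff_mod_two]; omega
    have hc : Carries l₁ l₂ (k + 1) := by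
      by_contra hc
      have := xiSeq_even_of_goodIdx hp1 hp2 hg
      rw [carry, if_neg hc] at this
      omega
    exact indPart_eq_of_carries hp1 hp2 hc

end Symplectic

theorem isSymplectic_indPart {l₁ l₂ : ℕ → ℕ}
    (hp1 : IsPartition l₁) (hz1 : EventuallyZero l₁) (hsymp1 : IsSymplectic l₁)
    (hspec1 : IsSpecial l₁) (hp2 : IsPartition l₂) (hz2 : EventuallyZero l₂)
    (horth2 : IsOrthogonal l₂) (hspec2 : IsSpecial l₂) :
    IsSymplectic (indPart l₁ l₂) := by
  have hpair1 := hspec1.pair_eq hp1 hz1 fun v _ hv => hsymp1 v (Nat.odd_iff.2 hv)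
  have hpair2 := hspec2.pair_eq hp2 hz2 fun v hv hv' => horth2 v hv (Nat.even_iff.2 hv')
  intro i hi
  rcases Set.eq_empty_or_nonempty {j | 1 ≤ j ∧ indPart l₁ l₂ j = i} with hS | ⟨j, hj, hji⟩
  · simp [mult, hS]
  obtain ⟨a, b, ha, hab, hS⟩ := (isPartition_indPart hp1 hp2).exists_eq_Icc
    (eventuallyZero_indPart hz1 hz2) hi.pos hj hji
  have mem : ∀ j, j ∈ Set.Icc a b ↔ 1 ≤ j ∧ indPart l₁ l₂ j = i := fun j => by rw [← hS]; rfl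
  obtain ⟨-, hai⟩ := (mem a).1 ⟨le_rfl, hab⟩
  obtain ⟨-, hbi⟩ := (mem b).1 ⟨hab, le_rfl⟩
  have ha_par : a % 2 = l₁ a % 2 := by
    by_contra h
    obtain ⟨a, rfl⟩ : ∃ a', a = a' + 1 := ⟨a - 1, by omega⟩
    obtain ⟨h1, he⟩ := indPart_pred_eq hp1 hp2 hspec1 hspec2 hpair1 hpair2 (hai ▸ hi) h
    have := ((mem a).2 ⟨h1, he.trans hai⟩).1
    omega
  have hb_par : b % 2 ≠ l₁ b % 2 := fun h => by
    have := indPart_succ_eq hp1 hp2 hpair1 hpair2 (ha.trans hab) (hbi ▸ hi) h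
    have := ((mem (b + 1)).2 ⟨by omega, this.trans hbi⟩).2
    omega
  have hconst : l₁ b = l₁ a := by
    have := xiSeq_eq_zero_of_odd (hai ▸ hi)
    have := xiSeq_eq_zero_of_odd (hbi ▸ hi)
    have := indPart_cast (l₁ := l₁) (l₂ := l₂) a
    have := indPart_cast (l₁ := l₁) (l₂ := l₂) b
    have := hp1.le_of_le ha hab
    have := hp2.le_of_le ha hab
    omega
  rw [mult_eq_of_eq_Icc hS, Nat.even_iff]
  omega

/-- the endoscopic induction `λ = λ₁ + λ₂ + ξ` is a symplectic
partition of `2n`. -/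
theorem endoscopic_induction_symplectic (n n₁ n₂ : ℕ) (hn : n₁ + n₂ = n)
    (l₁ l₂ : ℕ → ℕ)
    (hp1 : IsPartition l₁) (hz1 : EventuallyZero l₁) (hs1 : psum l₁ = 2 * n₁)
    (hsymp1 : IsSymplectic l₁) (hspec1 : IsSpecial l₁)
    (hp2 : IsPartition l₂) (hz2 : EventuallyZero l₂) (hs2 : psum l₂ = 2 * n₂)
    (horth2 : IsOrthogonal l₂) (hspec2 : IsSpecial l₂) :
    (∀ j, 1 ≤ j → 0 ≤ (l₁ j : ℤ) + (l₂ j : ℤ) + xiSeq l₁ l₂ j) ∧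
    IsPartition (indPart l₁ l₂) ∧ EventuallyZero (indPart l₁ l₂) ∧
    psum (indPart l₁ l₂) = 2 * n ∧ IsSymplectic (indPart l₁ l₂) :=
  ⟨fun j _ => add_xiSeq_nonneg j, isPartition_indPart hp1 hp2,
    eventuallyZero_indPart hz1 hz2,
    by rw [psum_indPart hp1 hz1 hspec1 hp2 hz2 hspec2, hs1, hs2, ← hn, mul_add],
    isSymplectic_indPart hp1 hz1 hsymp1 hspec1 hp2 hz2 horth2 hspec2⟩
end
end

section
/- Let λ₁, λ₂ be as in the endoscopic induction (λ₁ special symplectic, λ₂ special orthogonal), λ their endoscopic induction, and ζ_{λ₁,λ₂}(λ) the sequence equal to 1 on the set of odd j of the form j_min(D) for a relative interval D, −1 on the set of even j of the form j_max(D) for a non-minimal relative interval D, and 0 elsewhere. Then ζ(λ₁) + ζ(λ₂) = ζ_{λ₁,λ₂}(λ) + ξ, where ξ is the ±1-indicator sequence of J^+ and J^- and ζ(λ_d) is the ±1-indicator sequence of P^+(λ_d) and P^-(λ_d). -/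
open Classical

noncomputable section

/-- `J_{1,min}`: minima of index sets of intervals of `λ₁`. -/
def Jmin1 (l₁ i1 : ℕ → ℕ) (t1 : ℕ) : Set ℕ :=
  {j | ∃ Δ, IsItv l₁ i1 t1 Δ ∧ IsLeast (idxSet l₁ Δ) j}

/-- `J_{1,max}`: maxima of index sets of non-minimal intervals of `λ₁`. -/
def Jmax1 (l₁ i1 : ℕ → ℕ) (t1 : ℕ) : Set ℕ :=
  {j | ∃ Δ, IsItv l₁ i1 t1 Δ ∧ 0 ∉ Δ ∧ IsGreatest (idxSet l₁ Δ) j}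

/-- `J_{2,min}`: minima of index sets of intervals of `λ₂`. -/
def Jmin2 (l₂ i2 : ℕ → ℕ) (t2 : ℕ) : Set ℕ :=
  {j | ∃ Δ, IsItvO l₂ i2 t2 Δ ∧ IsLeast (idxSet l₂ Δ) j}

/-- `J_{2,max}`: maxima of index sets of intervals of `λ₂`. -/
def Jmax2 (l₂ i2 : ℕ → ℕ) (t2 : ℕ) : Set ℕ :=
  {j | ∃ Δ, IsItvO l₂ i2 t2 Δ ∧ IsGreatest (idxSet l₂ Δ) j}

/-- The finite part of the set `𝒥` of 3.1. -/
def JfinSet (l₁ l₂ i1 i2 : ℕ → ℕ) (t1 t2 : ℕ) : Set ℕ :=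
  Jmin1 l₁ i1 t1 ∪ Jmax1 l₁ i1 t1 ∪ Jmin2 l₂ i2 t2 ∪ Jmax2 l₂ i2 t2

/-- There is a unique `d ∈ {1,2}` such that `S ⊆ J(Δ)` for some interval `Δ` of `λ_d`. -/
def UniqueSide (l₁ l₂ i1 i2 : ℕ → ℕ) (t1 t2 : ℕ) (S : Set ℕ) : Prop :=
  Xor' (∃ Δ, IsItv l₁ i1 t1 Δ ∧ S ⊆ idxSet l₁ Δ)
       (∃ Δ, IsItvO l₂ i2 t2 Δ ∧ S ⊆ idxSet l₂ Δ)

/-- Relative index intervals of 3.1: singletons at `𝒥⁺ ∪ 𝒥⁻`, and intervals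
`{j,...,j'}` (or `{j,...}` when `j' = ∞`) between consecutive elements of `𝒥`
contained in `J(Δ)` for a unique side `d`. -/
def RelIdx (l₁ l₂ i1 i2 : ℕ → ℕ) (t1 t2 : ℕ) (J : Set ℕ) : Prop :=
  (∃ j, (j ∈ Jmin1 l₁ i1 t1 ∩ Jmin2 l₂ i2 t2 ∨
         j ∈ Jmax1 l₁ i1 t1 ∩ Jmax2 l₂ i2 t2) ∧ J = {j}) ∨
  (∃ j j', j ∈ JfinSet l₁ l₂ i1 i2 t1 t2 ∧ j' ∈ JfinSet l₁ l₂ i1 i2 t1 t2 ∧ j < j' ∧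
      (∀ k, j < k → k < j' → k ∉ JfinSet l₁ l₂ i1 i2 t1 t2) ∧
      UniqueSide l₁ l₂ i1 i2 t1 t2 (Set.Icc j j') ∧ J = Set.Icc j j') ∨
  (∃ j, j ∈ JfinSet l₁ l₂ i1 i2 t1 t2 ∧
      (∀ k, j < k → k ∉ JfinSet l₁ l₂ i1 i2 t1 t2) ∧
      UniqueSide l₁ l₂ i1 i2 t1 t2 (Set.Ici j) ∧ J = Set.Ici j)

/-- `P^+_{λ₁,λ₂}(λ)`: odd minima `j_min(D)` of relative intervals. -/
def PplusRel (l₁ l₂ i1 i2 : ℕ → ℕ) (t1 t2 : ℕ) : Set ℕ :=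
  {j | Odd j ∧ ∃ J, RelIdx l₁ l₂ i1 i2 t1 t2 J ∧ IsLeast J j}

/-- `P^-_{λ₁,λ₂}(λ)`: even maxima `j_max(D)` of (non-minimal) relative intervals. -/
def PminusRel (l₁ l₂ i1 i2 : ℕ → ℕ) (t1 t2 : ℕ) : Set ℕ :=
  {j | Even j ∧ ∃ J, RelIdx l₁ l₂ i1 i2 t1 t2 J ∧ IsGreatest J j}

/-- The sequence `ζ_{λ₁,λ₂}(λ)`. -/
def zetaRel (l₁ l₂ i1 i2 : ℕ → ℕ) (t1 t2 : ℕ) (j : ℕ) : ℤ :=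
  if j ∈ PplusRel l₁ l₂ i1 i2 t1 t2 then 1
  else if j ∈ PminusRel l₁ l₂ i1 i2 t1 t2 then -1 else 0

/-!
Let `numAbove l v` be the number of parts of `l` exceeding `v`. All parts other than the marked
values `iSeq h` occur with even multiplicity, so `numAbove l v` is odd exactly when `v` lies in
one of the half-open ranges `[iSeq (2h), iSeq (2h-1))`; specialness then forces every part in a
range to have the parity `ε` of the marked values. Hence the index set of an interval begins at
an odd index just after a strict descent and ends at an even index just before one, and every
such index whose part has parity `ε` bounds an interval: the minima and maxima of intervals
of `λ_d` are `P^±(λ_d)`. An odd index is then the minimum of a relative interval iff it is the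
minimum of an interval of both `λ₁` and `λ₂`, or of an interval of one side while the other side
has the wrong parity there (and dually for even indices and maxima), which turns the claim into a
pointwise identity between indicator functions.
-/

theorem IsPartition.anti {l : ℕ → ℕ} (hl : IsPartition l) {j k : ℕ} (hj : 1 ≤ j)
    (hjk : j ≤ k) : l k ≤ l j := by
  induction k, hjk using Nat.le_induction with
  | base => exact le_rfl
  | succ k hjk ih => exact (hl k (hj.trans hjk)).trans ih

theorem exists_of_mult_pos {l : ℕ → ℕ} {i : ℕ} (hi : 0 < mult l i) : ∃ k, 1 ≤ k ∧ l k = i := by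
  obtain ⟨⟨⟨k, hk⟩⟩, -⟩ := Nat.card_pos_iff.mp hi
  exact ⟨k, hk⟩

namespace EventuallyZero

variable {l : ℕ → ℕ}

theorem mult_zero (hz : EventuallyZero l) : mult l 0 = 0 := by
  obtain ⟨N, hN⟩ := hz
  have : Infinite {j : ℕ | 1 ≤ j ∧ l j = 0} := by
    refine Set.infinite_coe_iff.2 (Set.infinite_of_forall_exists_gt fun a => ?_)
    exact ⟨max N 1 + a, ⟨by omega, hN _ (by omega)⟩, by omega⟩
  exact Nat.card_eq_zero_of_infinite

theorem mult_pos (hz : EventuallyZero l) {j : ℕ} (hj : 1 ≤ j) (h0 : l j ≠ 0) :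
    0 < mult l (l j) := by
  obtain ⟨N, hN⟩ := hz
  have hfin : {k : ℕ | 1 ≤ k ∧ l k = l j}.Finite :=
    (Set.finite_Iio N).subset fun k hk => not_le.1 fun hNk => h0 (hk.2 ▸ hN k hNk)
  exact Nat.card_pos_iff.2 ⟨⟨⟨j, hj, rfl⟩⟩, hfin.to_subtype⟩

theorem eq_zero_or_mult_pos (hz : EventuallyZero l) {j : ℕ} (hj : 1 ≤ j) :
    l j = 0 ∨ 0 < mult l (l j) :=
  (eq_or_ne (l j) 0).imp_right (hz.mult_pos hj)

end EventuallyZero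

/-- For a finite partition, the number of parts exceeding `v` (see `lt_iff_le_numAbove`). -/
def numAbove (l : ℕ → ℕ) (v : ℕ) : ℕ := sInf {m | l (m + 1) ≤ v}

section numAbove

variable {l : ℕ → ℕ}

theorem EventuallyZero.apply_numAbove_succ_le (hz : EventuallyZero l) (v : ℕ) :
    l (numAbove l v + 1) ≤ v := by
  obtain ⟨N, hN⟩ := hz
  exact Nat.sInf_mem (s := {m | l (m + 1) ≤ v}) ⟨N, by simp [hN (N + 1) (by omega)]⟩

theorem lt_iff_le_numAbove (hl : IsPartition l) (hz : EventuallyZero l) {v k : ℕ}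
    (hk : 1 ≤ k) : v < l k ↔ k ≤ numAbove l v := by
  constructor
  · intro h
    by_contra hc
    have := hl.anti (j := numAbove l v + 1) (by omega) (by omega : numAbove l v + 1 ≤ k)
    have := hz.apply_numAbove_succ_le v
    omega
  · intro h
    have : k - 1 ∉ {m | l (m + 1) ≤ v} :=
      Nat.notMem_of_lt_sInf (show k - 1 < numAbove l v by omega)
    simpa [Nat.sub_add_cancel hk] using this

theorem apply_numAbove_succ (hl : IsPartition l) (hz : EventuallyZero l) {k : ℕ} (hk : 1 ≤ k) :
    l (numAbove l (l k) + 1) = l k := by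
  have hkle : numAbove l (l k) + 1 ≤ k := by
    have := (lt_iff_le_numAbove hl hz hk).not.1 (lt_irrefl _)
    omega
  have := hl.anti (by omega) hkle
  have := hz.apply_numAbove_succ_le (l k)
  omega

theorem numAbove_eq_sum_mult (hl : IsPartition l) (hz : EventuallyZero l) (v : ℕ) :
    numAbove l v = ∑ i ∈ Finset.Ioc v (l 1), mult l i := by
  obtain ⟨N, hN⟩ := hz
  set F := (Finset.Icc 1 (max N (numAbove l v))).filter (fun k => v < l k)
  have hF : F = Finset.Icc 1 (numAbove l v) := by
    ext k
    simp only [F, Finset.mem_filter, Finset.mem_Icc]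
    constructor
    · rintro ⟨⟨h1, -⟩, h2⟩
      exact ⟨h1, (lt_iff_le_numAbove hl ⟨N, hN⟩ h1).1 h2⟩
    · rintro ⟨h1, h2⟩
      exact ⟨⟨h1, by omega⟩, (lt_iff_le_numAbove hl ⟨N, hN⟩ h1).2 h2⟩
  have hfiber : ∀ i ∈ Finset.Ioc v (l 1), (F.filter (fun k => l k = i)).card = mult l i := by
    intro i hi
    rw [Finset.mem_Ioc] at hi
    have hset : {j : ℕ | 1 ≤ j ∧ l j = i} = ↑(F.filter (fun k => l k = i)) := by
      ext j
      simp only [Set.mem_ofPred_eq, Finset.coe_filter, F, Finset.mem_filter, Finset.mem_Icc]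
      constructor
      · rintro ⟨h1, rfl⟩
        have : j < N := not_le.1 fun hNj => by rw [hN j hNj] at hi; omega
        exact ⟨⟨⟨h1, by omega⟩, hi.1⟩, rfl⟩
      · rintro ⟨⟨⟨h1, -⟩, -⟩, h2⟩
        exact ⟨h1, h2⟩
    rw [mult, hset, Nat.card_coe_set_eq, Set.ncard_coe_finset]
  rw [← Finset.sum_congr rfl hfiber, ← Finset.card_eq_sum_card_fiberwise, hF, Nat.card_Icc,
    Nat.add_sub_cancel]
  intro k hk
  simp only [F, Finset.coe_filter, Finset.mem_Icc, Set.mem_ofPred_eq] at hk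
  exact Finset.mem_Ioc.2 ⟨hk.2, hl.anti le_rfl hk.1.1⟩

theorem numAbove_anti (hl : IsPartition l) (hz : EventuallyZero l) {v w : ℕ} (hvw : v ≤ w) :
    numAbove l w ≤ numAbove l v := by
  rcases Nat.eq_zero_or_pos (numAbove l w) with h0 | hpos
  · omega
  exact (lt_iff_le_numAbove hl hz hpos).1
    (hvw.trans_lt ((lt_iff_le_numAbove hl hz hpos).2 le_rfl))

theorem numAbove_eq_of_drop_before (hl : IsPartition l) (hz : EventuallyZero l) {j : ℕ}
    (hj : 1 ≤ j) (hdrop : j = 1 ∨ l (j - 1) > l j) : numAbove l (l j) = j - 1 := by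
  have := (lt_iff_le_numAbove hl hz hj).not.1 (lt_irrefl _)
  rcases eq_or_ne j 1 with rfl | hj'
  · omega
  · have := (lt_iff_le_numAbove hl hz (v := l j) (k := j - 1) (by omega)).1
      (hdrop.resolve_left hj')
    omega

theorem numAbove_pred_eq_of_drop_after (hl : IsPartition l) (hz : EventuallyZero l) {j : ℕ}
    (hj : 1 ≤ j) (hdrop : l j > l (j + 1)) : numAbove l (l j - 1) = j := by
  have := (lt_iff_le_numAbove hl hz hj).1 (by omega : l j - 1 < l j)
  have := (lt_iff_le_numAbove hl hz (v := l j - 1) (k := j + 1) (by omega)).not.1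
    (by omega)
  omega

end numAbove

/-- `iSeq 1 > ⋯ > iSeq t` lists the parts of `l` of odd multiplicity (possibly followed by a
final `0`), all of them of parity `ε`: `ε = 0` is the symplectic side, `ε = 1` the orthogonal
one. -/
structure MarkedPartition (l iSeq : ℕ → ℕ) (t ε : ℕ) : Prop where
  isPartition : IsPartition l
  eventuallyZero : EventuallyZero l
  isSpecial : IsSpecial l
  even_length : Even t
  strictAnti : ∀ h h', 1 ≤ h → h < h' → h' ≤ t → iSeq h' < iSeq h
  mod_two : ∀ h, 1 ≤ h → h ≤ t → iSeq h % 2 = ε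
  odd_mult : ∀ h, 1 ≤ h → h ≤ t → iSeq h ≠ 0 → Odd (mult l (iSeq h))
  exists_of_odd_mult : ∀ i, Odd (mult l i) → ∃ h, 1 ≤ h ∧ h ≤ t ∧ iSeq h = i

theorem MarkedSeq.markedPartition {l iSeq : ℕ → ℕ} {t : ℕ} (hm : MarkedSeq l iSeq t)
    (hp : IsPartition l) (hz : EventuallyZero l) (hsymp : IsSymplectic l) (hspec : IsSpecial l) :
    MarkedPartition l iSeq t 0 := by
  obtain ⟨ht, hdec, hpar, hodd, hcompl⟩ := hm
  refine ⟨hp, hz, hspec, ht, hdec, fun h h1 h2 => Nat.even_iff.1 (hpar h h1 h2), hodd,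
    fun i hi => hcompl i ?_ ?_ hi⟩
  · exact Nat.pos_of_ne_zero fun h0 => by simp [h0, hz.mult_zero] at hi
  · exact Nat.not_odd_iff_even.1 fun h => Nat.not_even_iff_odd.2 hi (hsymp i h)

theorem MarkedSeqO.markedPartition {l iSeq : ℕ → ℕ} {t : ℕ} (hm : MarkedSeqO l iSeq t)
    (hp : IsPartition l) (hz : EventuallyZero l) (horth : IsOrthogonal l) (hspec : IsSpecial l) :
    MarkedPartition l iSeq t 1 := by
  obtain ⟨ht, hdec, hpar, hodd, hcompl⟩ := hm
  refine ⟨hp, hz, hspec, ht, hdec, fun h h1 h2 => Nat.odd_iff.1 (hpar h h1 h2),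
    fun h h1 h2 _ => hodd h h1 h2, fun i hi => hcompl i ?_ hi⟩
  have hi0 : i ≠ 0 := fun h0 => by simp [h0, hz.mult_zero] at hi
  exact Nat.not_even_iff_odd.1 fun h =>
    Nat.not_even_iff_odd.2 hi (horth i (Nat.pos_of_ne_zero hi0) h)

theorem card_filter_Icc_lt {f : ℕ → ℕ} {t v m : ℕ} (hmt : m ≤ t)
    (hgt : ∀ h, 1 ≤ h → h ≤ m → v < f h) (hle : ∀ h, m < h → h ≤ t → f h ≤ v) :
    ((Finset.Icc 1 t).filter (fun h => v < f h)).card = m := by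
  have : (Finset.Icc 1 t).filter (fun h => v < f h) = Finset.Icc 1 m := by
    ext h
    simp only [Finset.mem_filter, Finset.mem_Icc]
    constructor
    · rintro ⟨⟨h1, h2⟩, hv⟩
      exact ⟨h1, not_lt.1 fun hmh => (hle h hmh h2).not_gt hv⟩
    · rintro ⟨h1, h2⟩
      exact ⟨⟨h1, h2.trans hmt⟩, hgt h h1 h2⟩
  rw [this, Nat.card_Icc, Nat.add_sub_cancel]

namespace MarkedPartition

variable {l iSeq : ℕ → ℕ} {t ε : ℕ}

theorem lt_iff (S : MarkedPartition l iSeq t ε) {h h' : ℕ} (h1 : 1 ≤ h) (h2 : h ≤ t)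
    (h1' : 1 ≤ h') (h2' : h' ≤ t) : iSeq h < iSeq h' ↔ h' < h := by
  constructor
  · intro hlt
    by_contra hc
    rcases (not_lt.1 hc).lt_or_eq with hc | rfl
    · exact absurd (S.strictAnti h h' h1 hc h2') (by omega)
    · exact lt_irrefl _ hlt
  · exact fun hlt => S.strictAnti h' h h1' hlt h2

theorem exists_split (S : MarkedPartition l iSeq t ε) (v : ℕ) :
    ∃ m ≤ t, (∀ h, 1 ≤ h → h ≤ m → v < iSeq h) ∧ ∀ h, m < h → h ≤ t → iSeq h ≤ v := by
  classical
  let P : ℕ → Prop := fun h => 1 ≤ h → v < iSeq h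
  have hm : P (Nat.findGreatest P t) :=
    Nat.findGreatest_spec (m := 0) (Nat.zero_le t) (by simp [P])
  refine ⟨Nat.findGreatest P t, Nat.findGreatest_le t, fun h h1 hle => ?_,
    fun h hlt hle => not_lt.1 fun hv => Nat.findGreatest_is_greatest hlt hle fun _ => hv⟩
  rcases hle.lt_or_eq with hlt | rfl
  · exact (hm (by omega)).trans (S.strictAnti h _ h1 hlt (Nat.findGreatest_le t))
  · exact hm h1

/-- Unmarked parts have even multiplicity, so only the marked values above `v` change the
parity of the number of parts above `v`. -/
theorem numAbove_mod_two (S : MarkedPartition l iSeq t ε) (v : ℕ) :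
    numAbove l v % 2 = ((Finset.Icc 1 t).filter (fun h => v < iSeq h)).card % 2 := by
  classical
  have hodd : (Finset.Ioc v (l 1)).filter (fun i => Odd (mult l i)) =
      ((Finset.Icc 1 t).filter (fun h => v < iSeq h)).image iSeq := by
    ext i
    simp only [Finset.mem_filter, Finset.mem_Ioc, Finset.mem_image, Finset.mem_Icc]
    constructor
    · rintro ⟨⟨hv, -⟩, hi⟩
      obtain ⟨h, h1, h2, rfl⟩ := S.exists_of_odd_mult i hi
      exact ⟨h, ⟨⟨h1, h2⟩, hv⟩, rfl⟩
    · rintro ⟨h, ⟨⟨h1, h2⟩, hv⟩, rfl⟩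
      have hi := S.odd_mult h h1 h2 (by omega)
      obtain ⟨k, hk, hlk⟩ := exists_of_mult_pos hi.pos
      exact ⟨⟨hv, hlk ▸ S.isPartition.anti le_rfl hk⟩, hi⟩
  have hinj : Set.InjOn iSeq ↑((Finset.Icc 1 t).filter (fun h => v < iSeq h)) := by
    intro a ha b hb hab
    simp only [Finset.coe_filter, Finset.mem_Icc, Set.mem_ofPred_eq] at ha hb
    by_contra hne
    rcases Nat.lt_or_gt_of_ne hne with hlt | hlt
    · exact absurd (S.strictAnti a b ha.1.1 hlt hb.1.2) (by omega)
    · exact absurd (S.strictAnti b a hb.1.1 hlt ha.1.2) (by omega)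
  have hsum := Finset.even_sum_iff_even_card_odd (s := Finset.Ioc v (l 1)) (mult l)
  rw [← Finset.card_image_of_injOn hinj, ← hodd, numAbove_eq_sum_mult S.isPartition
    S.eventuallyZero]
  simp only [Nat.even_iff] at hsum
  omega

theorem odd_numAbove_iff (S : MarkedPartition l iSeq t ε) (v : ℕ) :
    Odd (numAbove l v) ↔ ∃ h, 1 ≤ h ∧ 2 * h ≤ t ∧ iSeq (2 * h) ≤ v ∧ v < iSeq (2 * h - 1) := by
  obtain ⟨m, hmt, hgt, hle⟩ := S.exists_split v
  rw [Nat.odd_iff, S.numAbove_mod_two, card_filter_Icc_lt hmt hgt hle]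
  obtain ⟨u, hu⟩ := S.even_length
  constructor
  · intro hm
    refine ⟨(m + 1) / 2, by omega, by omega, hle _ (by omega) (by omega), ?_⟩
    rw [show 2 * ((m + 1) / 2) - 1 = m by omega]
    exact hgt m (by omega) le_rfl
  · rintro ⟨h, h1, h2, hb, ht⟩
    have : m = 2 * h - 1 := by
      by_contra hne
      rcases Nat.lt_or_gt_of_ne hne with hlt | hlt
      · exact (hle (2 * h - 1) hlt (by omega)).not_gt ht
      · exact (hgt (2 * h) (by omega) (by omega)).not_ge hb
    omega

theorem even_numAbove_top (S : MarkedPartition l iSeq t ε) {h : ℕ} (h1 : 1 ≤ h)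
    (h2 : 2 * h ≤ t) : Even (numAbove l (iSeq (2 * h - 1))) := by
  rw [← Nat.not_odd_iff_even, S.odd_numAbove_iff]
  rintro ⟨h', h1', h2', hb, ht⟩
  have := (S.lt_iff (by omega) (by omega) (by omega) (by omega)).1 ht
  have := (S.lt_iff (h := 2 * h - 1) (h' := 2 * h') (by omega) (by omega) (by omega) h2').not.1
    hb.not_gt
  omega

theorem even_numAbove_pred_bottom (S : MarkedPartition l iSeq t ε) {h : ℕ} (h1 : 1 ≤ h)
    (h2 : 2 * h ≤ t) (h0 : iSeq (2 * h) ≠ 0) : Even (numAbove l (iSeq (2 * h) - 1)) := by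
  rw [← Nat.not_odd_iff_even, S.odd_numAbove_iff]
  rintro ⟨h', h1', h2', hb, ht⟩
  have := (S.lt_iff (h := 2 * h') (h' := 2 * h) (by omega) h2' (by omega) h2).1 (by omega)
  have := (S.lt_iff (h := 2 * h' - 1) (h' := 2 * h) (by omega) (by omega) (by omega) h2).not.1
    (by omega)
  omega

theorem even_numAbove_of_not_inRange (S : MarkedPartition l iSeq t ε) {v : ℕ}
    (hv : ¬ InRange iSeq t v) : Even (numAbove l v) := by
  rw [← Nat.not_odd_iff_even, S.odd_numAbove_iff]
  rintro ⟨h, h1, h2, hb, ht⟩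
  exact hv ⟨h, h1, h2, hb, ht.le⟩

/-- Specialness pairs the first index of a part `v` strictly inside a range `[iSeq (2h),
iSeq (2h-1)]` (an even index, by `odd_numAbove_iff`) with the index before it, whose part is
larger, of the same parity and still in the range. -/
theorem exists_lt_of_inRange (S : MarkedPartition l iSeq t ε) {v : ℕ} (hm : 0 < mult l v)
    (hp : v % 2 ≠ ε) (hv : InRange iSeq t v) :
    ∃ w, v < w ∧ w ≤ l 1 ∧ 0 < mult l w ∧ w % 2 ≠ ε ∧ InRange iSeq t w := by
  obtain ⟨h, h1, h2, hb, ht⟩ := hv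
  have hbot := S.mod_two (2 * h) (by omega) h2
  have htop := S.mod_two (2 * h - 1) (by omega) (by omega)
  have hbv : iSeq (2 * h) < v := hb.lt_of_ne (by rintro rfl; exact hp hbot)
  have hvt : v < iSeq (2 * h - 1) := ht.lt_of_ne (by rintro rfl; exact hp htop)
  obtain ⟨a, ha⟩ := (S.odd_numAbove_iff v).2 ⟨h, h1, h2, hbv.le, hvt⟩
  obtain ⟨k, hk, rfl⟩ := exists_of_mult_pos hm
  have hfirst := apply_numAbove_succ S.isPartition S.eventuallyZero hk
  have hspec := S.isSpecial (a + 1) (by omega)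
  rw [show 2 * (a + 1) - 1 = numAbove l (l k) by omega,
    show 2 * (a + 1) = numAbove l (l k) + 1 by omega, hfirst] at hspec
  have hlt := (lt_iff_le_numAbove S.isPartition S.eventuallyZero (k := numAbove l (l k))
    (by omega)).2 le_rfl
  have hle : l (numAbove l (l k)) ≤ iSeq (2 * h - 1) := by
    by_contra hc
    have := (lt_iff_le_numAbove S.isPartition S.eventuallyZero (by omega)).1 (not_le.1 hc)
    have := numAbove_anti S.isPartition S.eventuallyZero hvt.le
    have := S.even_numAbove_top h1 h2
    rw [Nat.even_iff] at this
    omega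
  exact ⟨_, hlt, S.isPartition.anti le_rfl (by omega),
    S.eventuallyZero.mult_pos (by omega) (by omega), by omega, h, h1, h2, by omega, hle⟩

theorem not_inRange (S : MarkedPartition l iSeq t ε) {v : ℕ} (hm : 0 < mult l v)
    (hp : v % 2 ≠ ε) : ¬ InRange iSeq t v := by
  intro hv
  obtain ⟨w, hvw, hw1, hw, hwp, hwR⟩ := S.exists_lt_of_inRange hm hp hv
  exact S.not_inRange hw hwp hwR
termination_by l 1 - v

end MarkedPartition

/-- The intervals of a marked partition: `IsItv` is the case `ε = 0` and `IsItvO` the case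
`ε = 1` (`isItv_iff`, `MarkedPartition.isItvO_iff`). -/
def IsInterval (l iSeq : ℕ → ℕ) (t ε : ℕ) (Δ : Set ℕ) : Prop :=
  (∃ h, 1 ≤ h ∧ 2 * h ≤ t ∧
      Δ = {i | (i = 0 ∨ 0 < mult l i) ∧ iSeq (2 * h) ≤ i ∧ i ≤ iSeq (2 * h - 1)}) ∨
  (∃ i, i % 2 = ε ∧ (i = 0 ∨ 0 < mult l i) ∧ ¬ InRange iSeq t i ∧ Δ = {i})

theorem IsInterval.eq_zero_or_mult_pos_of_mem {l iSeq : ℕ → ℕ} {t ε : ℕ} {Δ : Set ℕ}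
    (hΔ : IsInterval l iSeq t ε Δ) {i : ℕ} (hi : i ∈ Δ) :
    i = 0 ∨ 0 < mult l i := by
  rcases hΔ with ⟨h, -, -, rfl⟩ | ⟨i₀, -, hm, -, rfl⟩
  · exact hi.1
  · rwa [hi]

theorem IsInterval.mem_of_le_of_le {l iSeq : ℕ → ℕ} {t ε : ℕ} {Δ : Set ℕ}
    (hΔ : IsInterval l iSeq t ε Δ) {i i' v : ℕ} (hi : i ∈ Δ) (hi' : i' ∈ Δ)
    (hv : v = 0 ∨ 0 < mult l v) (h1 : i ≤ v) (h2 : v ≤ i') : v ∈ Δ := by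
  rcases hΔ with ⟨h, -, -, rfl⟩ | ⟨i₀, -, -, -, rfl⟩
  · exact ⟨hv, hi.2.1.trans h1, h2.trans hi'.2.2⟩
  · rw [Set.mem_singleton_iff] at hi hi' ⊢
    omega

theorem isItv_iff {l iSeq : ℕ → ℕ} {t : ℕ} {Δ : Set ℕ} :
    IsItv l iSeq t Δ ↔ IsInterval l iSeq t 0 Δ := by
  simp only [IsItv, IsInterval, Nat.even_iff]

theorem EventuallyZero.not_bddAbove_idxSet {l : ℕ → ℕ} (hz : EventuallyZero l) {Δ : Set ℕ}
    (h0 : 0 ∈ Δ) : ¬ BddAbove (idxSet l Δ) := by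
  rintro ⟨B, hB⟩
  obtain ⟨N, hN⟩ := hz
  have := hB (show N + B + 1 ∈ idxSet l Δ from ⟨by omega, by rw [hN _ (by omega)]; exact h0⟩)
  omega

theorem EventuallyZero.bddAbove_idxSet {l : ℕ → ℕ} (hz : EventuallyZero l) {Δ : Set ℕ}
    (h0 : 0 ∉ Δ) : BddAbove (idxSet l Δ) := by
  obtain ⟨N, hN⟩ := hz
  exact ⟨N, fun k hk => not_lt.1 fun hNk => h0 (hN k hNk.le ▸ hk.2)⟩

namespace MarkedPartition

variable {l iSeq : ℕ → ℕ} {t ε : ℕ} {Δ : Set ℕ}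

theorem isItvO_iff (S : MarkedPartition l iSeq t 1) :
    IsItvO l iSeq t Δ ↔ IsInterval l iSeq t 1 Δ := by
  unfold IsItvO IsInterval
  refine or_congr (exists_congr fun h => ?_) (exists_congr fun i => ?_)
  · refine and_congr_right fun h1 => and_congr_right fun h2 => ?_
    have := S.mod_two (2 * h) (by omega) h2
    have hrange : {i | 0 < mult l i ∧ iSeq (2 * h) ≤ i ∧ i ≤ iSeq (2 * h - 1)} =
        {i | (i = 0 ∨ 0 < mult l i) ∧ iSeq (2 * h) ≤ i ∧ i ≤ iSeq (2 * h - 1)} := by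
      ext i
      simp only [Set.mem_ofPred_eq]
      constructor
      · exact fun ⟨hm, hi⟩ => ⟨Or.inr hm, hi⟩
      · rintro ⟨rfl | hm, hi⟩
        · omega
        · exact ⟨hm, hi⟩
    rw [hrange]
  · rw [Nat.odd_iff]
    constructor
    · exact fun ⟨hp, hm, hi⟩ => ⟨hp, Or.inr hm, hi⟩
    · rintro ⟨hp, rfl | hm, hi⟩
      · omega
      · exact ⟨hp, hm, hi⟩

theorem exists_mem (S : MarkedPartition l iSeq t ε) {j : ℕ} (hj : 1 ≤ j) (hp : l j % 2 = ε) :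
    ∃ Δ, IsInterval l iSeq t ε Δ ∧ j ∈ idxSet l Δ := by
  by_cases hv : InRange iSeq t (l j)
  · obtain ⟨h, h1, h2, hb, ht⟩ := hv
    exact ⟨_, Or.inl ⟨h, h1, h2, rfl⟩, hj, S.eventuallyZero.eq_zero_or_mult_pos hj, hb, ht⟩
  · exact ⟨{l j}, Or.inr ⟨l j, hp, S.eventuallyZero.eq_zero_or_mult_pos hj, hv, rfl⟩, hj, rfl⟩

theorem mod_two_of_mem (S : MarkedPartition l iSeq t ε) (hΔ : IsInterval l iSeq t ε Δ)
    {i : ℕ} (hi : i ∈ Δ) : i % 2 = ε := by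
  rcases hΔ with ⟨h, h1, h2, rfl⟩ | ⟨i, hp, -, -, rfl⟩
  · obtain ⟨rfl | hm, hb, ht⟩ := hi
    · have := S.mod_two (2 * h) (by omega) h2
      omega
    · exact not_not.1 fun hp => S.not_inRange hm hp ⟨h, h1, h2, hb, ht⟩
  · rwa [hi]

theorem odd_numAbove_of_le_of_lt (S : MarkedPartition l iSeq t ε)
    (hΔ : IsInterval l iSeq t ε Δ) {i i' v : ℕ} (hi : i ∈ Δ) (hi' : i' ∈ Δ) (h1 : i ≤ v)
    (h2 : v < i') : Odd (numAbove l v) := by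
  rcases hΔ with ⟨h, h1', h2', rfl⟩ | ⟨i₀, -, -, -, rfl⟩
  · exact (S.odd_numAbove_iff v).2 ⟨h, h1', h2', hi.2.1.trans h1, h2.trans_le hi'.2.2⟩
  · rw [Set.mem_singleton_iff] at hi hi'
    omega

theorem even_numAbove_of_isGreatest (S : MarkedPartition l iSeq t ε)
    (hΔ : IsInterval l iSeq t ε Δ) {M : ℕ} (hM : IsGreatest Δ M) : Even (numAbove l M) := by
  rcases hΔ with ⟨h, h1, h2, rfl⟩ | ⟨i, -, -, hv, rfl⟩
  · have hlt := S.strictAnti (2 * h - 1) (2 * h) (by omega) (by omega) h2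
    have htop : iSeq (2 * h - 1) ∈ {i | (i = 0 ∨ 0 < mult l i) ∧ iSeq (2 * h) ≤ i ∧
        i ≤ iSeq (2 * h - 1)} :=
      ⟨Or.inr (S.odd_mult _ (by omega) (by omega) (by omega)).pos, hlt.le, le_rfl⟩
    rw [le_antisymm hM.1.2.2 (hM.2 htop)]
    exact S.even_numAbove_top h1 h2
  · rw [hM.1]
    exact S.even_numAbove_of_not_inRange hv

theorem even_numAbove_pred_of_isLeast (S : MarkedPartition l iSeq t ε)
    (hΔ : IsInterval l iSeq t ε Δ) {m : ℕ} (hm : IsLeast Δ m) (h0 : m ≠ 0) :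
    Even (numAbove l (m - 1)) := by
  rcases hΔ with ⟨h, h1, h2, rfl⟩ | ⟨i, hp, -, hv, rfl⟩
  · have hlt := S.strictAnti (2 * h - 1) (2 * h) (by omega) (by omega) h2
    have hbot0 : iSeq (2 * h) ≠ 0 := fun hb => h0 (Nat.le_zero.1 (hm.2 ⟨Or.inl rfl, hb.le,
      Nat.zero_le _⟩))
    have hbot : iSeq (2 * h) ∈ {i | (i = 0 ∨ 0 < mult l i) ∧ iSeq (2 * h) ≤ i ∧
        i ≤ iSeq (2 * h - 1)} :=
      ⟨Or.inr (S.odd_mult _ (by omega) h2 hbot0).pos, le_rfl, hlt.le⟩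
    rw [le_antisymm (hm.2 hbot) hm.1.2.1]
    exact S.even_numAbove_pred_bottom h1 h2 hbot0
  · rw [hm.1] at h0 ⊢
    refine S.even_numAbove_of_not_inRange fun ⟨h, h1, h2, hb, ht⟩ => hv ⟨h, h1, h2, by omega, ?_⟩
    have := S.mod_two (2 * h - 1) (by omega) (by omega)
    omega

theorem isGreatest_of_isLeast_idxSet (S : MarkedPartition l iSeq t ε)
    (hΔ : IsInterval l iSeq t ε Δ) {j : ℕ} (hj : IsLeast (idxSet l Δ) j) :
    IsGreatest Δ (l j) := by
  refine ⟨hj.1.2, fun i hi => not_lt.1 fun hlt => ?_⟩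
  obtain ⟨a, ha, rfl⟩ := exists_of_mult_pos
    ((hΔ.eq_zero_or_mult_pos_of_mem hi).resolve_left (by omega))
  exact (S.isPartition.anti hj.1.1 (hj.2 ⟨ha, hi⟩)).not_gt hlt

theorem isLeast_of_isGreatest_idxSet (S : MarkedPartition l iSeq t ε)
    (hΔ : IsInterval l iSeq t ε Δ) (h0 : 0 ∉ Δ) {j : ℕ} (hj : IsGreatest (idxSet l Δ) j) :
    IsLeast Δ (l j) := by
  refine ⟨hj.1.2, fun i hi => not_lt.1 fun hlt => ?_⟩
  obtain ⟨a, ha, rfl⟩ := exists_of_mult_pos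
    ((hΔ.eq_zero_or_mult_pos_of_mem hi).resolve_left fun h => h0 (h ▸ hi))
  exact (S.isPartition.anti ha (hj.2 ⟨ha, hi⟩)).not_gt hlt

theorem isLeast_idxSet (S : MarkedPartition l iSeq t ε) (hΔ : IsInterval l iSeq t ε Δ)
    {j : ℕ} (hj : IsLeast (idxSet l Δ) j) :
    Odd j ∧ l j % 2 = ε ∧ (j = 1 ∨ l (j - 1) > l j) := by
  obtain ⟨⟨hj1, hjΔ⟩, hleast⟩ := hj
  have hdrop : j = 1 ∨ l (j - 1) > l j := by
    refine or_iff_not_imp_left.2 fun hj' => lt_of_le_of_ne (S.isPartition.anti (by omega)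
      (by omega)) fun heq => ?_
    have := hleast ⟨by omega, heq ▸ hjΔ⟩
    omega
  have heven := S.even_numAbove_of_isGreatest hΔ (S.isGreatest_of_isLeast_idxSet hΔ
    ⟨⟨hj1, hjΔ⟩, hleast⟩)
  rw [numAbove_eq_of_drop_before S.isPartition S.eventuallyZero hj1 hdrop, Nat.even_iff] at heven
  exact ⟨Nat.odd_iff.2 (by omega), S.mod_two_of_mem hΔ hjΔ, hdrop⟩

theorem isGreatest_idxSet (S : MarkedPartition l iSeq t ε) (hΔ : IsInterval l iSeq t ε Δ)
    {j : ℕ} (hj : IsGreatest (idxSet l Δ) j) :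
    0 ∉ Δ ∧ Even j ∧ 1 ≤ j ∧ l j % 2 = ε ∧ l j > l (j + 1) := by
  have h0 : 0 ∉ Δ := fun h0 => S.eventuallyZero.not_bddAbove_idxSet h0 ⟨j, hj.2⟩
  obtain ⟨⟨hj1, hjΔ⟩, hgreatest⟩ := hj
  have hdrop : l j > l (j + 1) := by
    refine lt_of_le_of_ne (S.isPartition j hj1) fun heq => ?_
    have := hgreatest ⟨by omega, heq ▸ hjΔ⟩
    omega
  have heven := S.even_numAbove_pred_of_isLeast hΔ (S.isLeast_of_isGreatest_idxSet hΔ h0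
    ⟨⟨hj1, hjΔ⟩, hgreatest⟩) fun h => h0 (h ▸ hjΔ)
  rw [numAbove_pred_eq_of_drop_after S.isPartition S.eventuallyZero hj1 hdrop] at heven
  exact ⟨h0, heven, hj1, S.mod_two_of_mem hΔ hjΔ, hdrop⟩

theorem exists_isLeast_idxSet (S : MarkedPartition l iSeq t ε) {j : ℕ} (hodd : Odd j)
    (hp : l j % 2 = ε) (hdrop : j = 1 ∨ l (j - 1) > l j) :
    ∃ Δ, IsInterval l iSeq t ε Δ ∧ IsLeast (idxSet l Δ) j := by
  have hj1 : 1 ≤ j := hodd.pos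
  obtain ⟨Δ, hΔ, hjΔ⟩ := S.exists_mem hj1 hp
  have hN := numAbove_eq_of_drop_before S.isPartition S.eventuallyZero hj1 hdrop
  refine ⟨Δ, hΔ, hjΔ, fun k hk => not_lt.1 fun hkj => ?_⟩
  have hlt := (lt_iff_le_numAbove S.isPartition S.eventuallyZero (v := l j) hk.1).2 (by omega)
  have := S.odd_numAbove_of_le_of_lt hΔ hjΔ.2 hk.2 le_rfl hlt
  rw [hN, Nat.odd_iff] at this
  rw [Nat.odd_iff] at hodd
  omega

theorem exists_isGreatest_idxSet (S : MarkedPartition l iSeq t ε) {j : ℕ} (heven : Even j)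
    (hj1 : 1 ≤ j) (hp : l j % 2 = ε) (hdrop : l j > l (j + 1)) :
    ∃ Δ, IsInterval l iSeq t ε Δ ∧ 0 ∉ Δ ∧ IsGreatest (idxSet l Δ) j := by
  obtain ⟨Δ, hΔ, hjΔ⟩ := S.exists_mem hj1 hp
  have hN := numAbove_pred_eq_of_drop_after S.isPartition S.eventuallyZero hj1 hdrop
  have hodd : ∀ i ∈ Δ, i < l j → Odd j := fun i hi hlt =>
    hN ▸ S.odd_numAbove_of_le_of_lt hΔ hi hjΔ.2 (by omega) (by omega)
  refine ⟨Δ, hΔ, fun h0 => ?_, hjΔ, fun k hk => not_lt.1 fun hjk => ?_⟩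
  · exact Nat.not_odd_iff_even.2 heven (hodd 0 h0 (by omega))
  · have := S.isPartition.anti (j := j + 1) (by omega) hjk
    exact Nat.not_odd_iff_even.2 heven (hodd _ hk.2 (by omega))

end MarkedPartition

/-- `J_{d,min}` and `J_{d,max}`, uniformly in the side (`Jmin1_eq`, `Jmax1_eq`, …). -/
def intervalMins (l iSeq : ℕ → ℕ) (t ε : ℕ) : Set ℕ :=
  {j | ∃ Δ, IsInterval l iSeq t ε Δ ∧ IsLeast (idxSet l Δ) j}

def intervalMaxs (l iSeq : ℕ → ℕ) (t ε : ℕ) : Set ℕ :=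
  {j | ∃ Δ, IsInterval l iSeq t ε Δ ∧ 0 ∉ Δ ∧ IsGreatest (idxSet l Δ) j}

def Covers (l iSeq : ℕ → ℕ) (t ε : ℕ) (A : Set ℕ) : Prop :=
  ∃ Δ, IsInterval l iSeq t ε Δ ∧ A ⊆ idxSet l Δ

theorem Covers.mono {l iSeq : ℕ → ℕ} {t ε : ℕ} {A B : Set ℕ} (h : Covers l iSeq t ε B)
    (hAB : A ⊆ B) : Covers l iSeq t ε A :=
  let ⟨Δ, hΔ, hB⟩ := h
  ⟨Δ, hΔ, hAB.trans hB⟩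

namespace MarkedPartition

variable {l iSeq : ℕ → ℕ} {t ε : ℕ} {Δ : Set ℕ} {j : ℕ}

theorem mem_intervalMins_iff (S : MarkedPartition l iSeq t ε) :
    j ∈ intervalMins l iSeq t ε ↔ Odd j ∧ l j % 2 = ε ∧ (j = 1 ∨ l (j - 1) > l j) :=
  ⟨fun ⟨_, hΔ, hj⟩ => S.isLeast_idxSet hΔ hj, fun ⟨h1, h2, h3⟩ => S.exists_isLeast_idxSet h1 h2 h3⟩

theorem mem_intervalMaxs_iff (S : MarkedPartition l iSeq t ε) :
    j ∈ intervalMaxs l iSeq t ε ↔ Even j ∧ 1 ≤ j ∧ l j % 2 = ε ∧ l j > l (j + 1) :=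
  ⟨fun ⟨_, hΔ, _, hj⟩ => (S.isGreatest_idxSet hΔ hj).2,
    fun ⟨h1, h2, h3, h4⟩ => S.exists_isGreatest_idxSet h1 h2 h3 h4⟩

theorem ordConnected_idxSet (S : MarkedPartition l iSeq t ε) (hΔ : IsInterval l iSeq t ε Δ) :
    (idxSet l Δ).OrdConnected :=
  ⟨fun _ ha _ hb _ hk => ⟨ha.1.trans hk.1, hΔ.mem_of_le_of_le hb.2 ha.2
    (S.eventuallyZero.eq_zero_or_mult_pos (ha.1.trans hk.1)) (S.isPartition.anti
    (ha.1.trans hk.1) hk.2) (S.isPartition.anti ha.1 hk.1)⟩⟩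

theorem Ici_subset_idxSet (S : MarkedPartition l iSeq t ε) (hΔ : IsInterval l iSeq t ε Δ)
    (h0 : 0 ∈ Δ) (hj : j ∈ idxSet l Δ) : Set.Ici j ⊆ idxSet l Δ :=
  fun _ hk => ⟨hj.1.trans hk, hΔ.mem_of_le_of_le h0 hj.2
    (S.eventuallyZero.eq_zero_or_mult_pos (hj.1.trans hk)) (Nat.zero_le _)
    (S.isPartition.anti hj.1 hk)⟩

theorem not_covers (S : MarkedPartition l iSeq t ε) {A : Set ℕ} (hp : l j % 2 ≠ ε)
    (hj : j ∈ A) : ¬ Covers l iSeq t ε A :=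
  fun ⟨_, hΔ, hA⟩ => hp (S.mod_two_of_mem hΔ (hA hj).2)

theorem not_covers_Ici (S : MarkedPartition l iSeq t ε) (hε : ε ≠ 0) :
    ¬ Covers l iSeq t ε (Set.Ici j) := fun ⟨_, hΔ, hA⟩ =>
  not_bddAbove_Ici j ((S.eventuallyZero.bddAbove_idxSet fun h0 =>
    hε (S.mod_two_of_mem hΔ h0).symm).mono hA)

theorem covers_Ici_or_of_odd (S : MarkedPartition l iSeq t ε) (hodd : Odd j)
    (hp : l j % 2 = ε) :
    Covers l iSeq t ε (Set.Ici j) ∨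
      ∃ b ∈ intervalMaxs l iSeq t ε, j < b ∧ Covers l iSeq t ε (Set.Icc j b) := by
  obtain ⟨Δ, hΔ, hjΔ⟩ := S.exists_mem hodd.pos hp
  by_cases h0 : 0 ∈ Δ
  · exact Or.inl ⟨Δ, hΔ, S.Ici_subset_idxSet hΔ h0 hjΔ⟩
  have hbdd := S.eventuallyZero.bddAbove_idxSet h0
  have hb : IsGreatest (idxSet l Δ) (sSup (idxSet l Δ)) :=
    ⟨Nat.sSup_mem ⟨j, hjΔ⟩ hbdd, fun k hk => le_csSup hbdd hk⟩
  have hbeven := (S.isGreatest_idxSet hΔ hb).2.1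
  refine Or.inr ⟨_, ⟨Δ, hΔ, h0, hb⟩, (hb.2 hjΔ).lt_of_ne ?_, Δ, hΔ,
    (S.ordConnected_idxSet hΔ).out hjΔ hb.1⟩
  rintro h
  exact Nat.not_even_iff_odd.2 hodd (h ▸ hbeven)

theorem exists_mem_intervalMins_lt (S : MarkedPartition l iSeq t ε) (heven : Even j)
    (hj1 : 1 ≤ j) (hp : l j % 2 = ε) :
    ∃ a ∈ intervalMins l iSeq t ε, a < j ∧ Covers l iSeq t ε (Set.Icc a j) := by
  obtain ⟨Δ, hΔ, hjΔ⟩ := S.exists_mem hj1 hp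
  have ha : IsLeast (idxSet l Δ) (sInf (idxSet l Δ)) :=
    ⟨Nat.sInf_mem ⟨j, hjΔ⟩, fun k hk => Nat.sInf_le hk⟩
  have haodd := (S.isLeast_idxSet hΔ ha).1
  refine ⟨_, ⟨Δ, hΔ, ha⟩, (ha.2 hjΔ).lt_of_ne ?_, Δ, hΔ,
    (S.ordConnected_idxSet hΔ).out ha.1 hjΔ⟩
  rintro h
  exact Nat.not_even_iff_odd.2 haodd (h ▸ heven)

theorem covers_Icc_of_next (S : MarkedPartition l iSeq t ε) {F : Set ℕ}
    (hF : intervalMaxs l iSeq t ε ⊆ F) (hodd : Odd j) (hp : l j % 2 = ε) {j' : ℕ}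
    (hnext : ∀ k ∈ F, j < k → j' ≤ k) : Covers l iSeq t ε (Set.Icc j j') := by
  rcases S.covers_Ici_or_of_odd hodd hp with h | ⟨b, hb, hjb, h⟩
  · exact h.mono Set.Icc_subset_Ici_self
  · exact h.mono (Set.Icc_subset_Icc_right (hnext b (hF hb) hjb))

theorem covers_Ici_of_forall_le (S : MarkedPartition l iSeq t ε) {F : Set ℕ}
    (hF : intervalMaxs l iSeq t ε ⊆ F) (hodd : Odd j) (hp : l j % 2 = ε)
    (hlast : ∀ k ∈ F, k ≤ j) : Covers l iSeq t ε (Set.Ici j) :=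
  (S.covers_Ici_or_of_odd hodd hp).resolve_right fun ⟨b, hb, hjb, _⟩ =>
    (hlast b (hF hb)).not_gt hjb

theorem covers_Icc_of_prev (S : MarkedPartition l iSeq t ε) {F : Set ℕ}
    (hF : intervalMins l iSeq t ε ⊆ F) (heven : Even j) (hj1 : 1 ≤ j) (hp : l j % 2 = ε)
    {j₀ : ℕ} (hprev : ∀ k ∈ F, k < j → k ≤ j₀) : Covers l iSeq t ε (Set.Icc j₀ j) := by
  obtain ⟨a, ha, haj, h⟩ := S.exists_mem_intervalMins_lt heven hj1 hp
  exact h.mono (Set.Icc_subset_Icc_left (hprev a (hF ha) haj))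

end MarkedPartition

section Relative

variable {l₁ l₂ i1 i2 : ℕ → ℕ} {t1 t2 : ℕ} {j : ℕ}

theorem Jmin1_eq : Jmin1 l₁ i1 t1 = intervalMins l₁ i1 t1 0 := by
  ext
  simp only [Jmin1, intervalMins, isItv_iff]

theorem Jmax1_eq : Jmax1 l₁ i1 t1 = intervalMaxs l₁ i1 t1 0 := by
  ext
  simp only [Jmax1, intervalMaxs, isItv_iff]

theorem MarkedPartition.Jmin2_eq (S2 : MarkedPartition l₂ i2 t2 1) :
    Jmin2 l₂ i2 t2 = intervalMins l₂ i2 t2 1 := by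
  ext
  simp only [Jmin2, intervalMins, S2.isItvO_iff]

theorem MarkedPartition.Jmax2_eq (S2 : MarkedPartition l₂ i2 t2 1) :
    Jmax2 l₂ i2 t2 = intervalMaxs l₂ i2 t2 1 := by
  ext
  simp only [Jmax2, intervalMaxs, S2.isItvO_iff]
  exact ⟨fun ⟨Δ, hΔ, hj⟩ => ⟨Δ, hΔ, (S2.isGreatest_idxSet hΔ hj).1, hj⟩,
    fun ⟨Δ, hΔ, _, hj⟩ => ⟨Δ, hΔ, hj⟩⟩

theorem MarkedPartition.jfinSet_eq (S2 : MarkedPartition l₂ i2 t2 1) :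
    JfinSet l₁ l₂ i1 i2 t1 t2 = intervalMins l₁ i1 t1 0 ∪ intervalMaxs l₁ i1 t1 0 ∪
      intervalMins l₂ i2 t2 1 ∪ intervalMaxs l₂ i2 t2 1 := by
  rw [JfinSet, Jmin1_eq, Jmax1_eq, S2.Jmin2_eq, S2.Jmax2_eq]

theorem MarkedPartition.uniqueSide_iff (S2 : MarkedPartition l₂ i2 t2 1) {A : Set ℕ} :
    UniqueSide l₁ l₂ i1 i2 t1 t2 A ↔ Xor (Covers l₁ i1 t1 0 A) (Covers l₂ i2 t2 1 A) := by
  simp only [UniqueSide, Covers, isItv_iff, S2.isItvO_iff]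
  exact Iff.rfl

theorem mem_PplusRel_of_uniqueSide (hodd : Odd j) (hj : j ∈ JfinSet l₁ l₂ i1 i2 t1 t2)
    (hIcc : ∀ j', j < j' → (∀ k ∈ JfinSet l₁ l₂ i1 i2 t1 t2, j < k → j' ≤ k) →
      UniqueSide l₁ l₂ i1 i2 t1 t2 (Set.Icc j j'))
    (hIci : (∀ k ∈ JfinSet l₁ l₂ i1 i2 t1 t2, k ≤ j) →
      UniqueSide l₁ l₂ i1 i2 t1 t2 (Set.Ici j)) :
    j ∈ PplusRel l₁ l₂ i1 i2 t1 t2 := by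
  classical
  by_cases hnext : ∃ k, k ∈ JfinSet l₁ l₂ i1 i2 t1 t2 ∧ j < k
  · obtain ⟨hj'F, hjj'⟩ := Nat.find_spec hnext
    have hmin : ∀ k ∈ JfinSet l₁ l₂ i1 i2 t1 t2, j < k → Nat.find hnext ≤ k :=
      fun k hk hjk => Nat.find_min' hnext ⟨hk, hjk⟩
    exact ⟨hodd, _, Or.inr (Or.inl ⟨j, _, hj, hj'F, hjj', fun k hjk hkj' hk =>
      (hmin k hk hjk).not_gt hkj', hIcc _ hjj' hmin, rfl⟩), isLeast_Icc hjj'.le⟩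
  · simp only [not_exists, not_and, not_lt] at hnext
    exact ⟨hodd, _, Or.inr (Or.inr ⟨j, hj, fun k hjk hk => (hnext k hk).not_gt hjk,
      hIci hnext, rfl⟩), isLeast_Ici⟩

theorem mem_PminusRel_of_uniqueSide (heven : Even j) (hj : j ∈ JfinSet l₁ l₂ i1 i2 t1 t2)
    (hprev : ∃ k ∈ JfinSet l₁ l₂ i1 i2 t1 t2, k < j)
    (hIcc : ∀ j₀, j₀ < j → (∀ k ∈ JfinSet l₁ l₂ i1 i2 t1 t2, k < j → k ≤ j₀) →
      UniqueSide l₁ l₂ i1 i2 t1 t2 (Set.Icc j₀ j)) :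
    j ∈ PminusRel l₁ l₂ i1 i2 t1 t2 := by
  classical
  let P : ℕ → Prop := fun k => k ∈ JfinSet l₁ l₂ i1 i2 t1 t2 ∧ k < j
  obtain ⟨k, hkF, hkj⟩ := hprev
  obtain ⟨hj₀F, hj₀j⟩ : P (Nat.findGreatest P j) := Nat.findGreatest_spec hkj.le ⟨hkF, hkj⟩
  have hmax : ∀ k ∈ JfinSet l₁ l₂ i1 i2 t1 t2, k < j → k ≤ Nat.findGreatest P j :=
    fun k hk hkj => not_lt.1 fun h => Nat.findGreatest_is_greatest h hkj.le ⟨hk, hkj⟩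
  exact ⟨heven, _, Or.inr (Or.inl ⟨_, j, hj₀F, hj, hj₀j, fun k hj₀k hkj hk =>
    (hmax k hk hkj).not_gt hj₀k, hIcc _ hj₀j hmax, rfl⟩), isGreatest_Icc hj₀j.le⟩

theorem mem_intervalMins_of_odd_of_mem_jfinSet (S1 : MarkedPartition l₁ i1 t1 0)
    (S2 : MarkedPartition l₂ i2 t2 1) (hodd : Odd j) (hj : j ∈ JfinSet l₁ l₂ i1 i2 t1 t2) :
    j ∈ intervalMins l₁ i1 t1 0 ∨ j ∈ intervalMins l₂ i2 t2 1 := by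
  rw [S2.jfinSet_eq] at hj
  rcases hj with ((h | h) | h) | h
  · exact Or.inl h
  · exact absurd (S1.mem_intervalMaxs_iff.1 h).1 (Nat.not_even_iff_odd.2 hodd)
  · exact Or.inr h
  · exact absurd (S2.mem_intervalMaxs_iff.1 h).1 (Nat.not_even_iff_odd.2 hodd)

theorem mem_intervalMaxs_of_even_of_mem_jfinSet (S1 : MarkedPartition l₁ i1 t1 0)
    (S2 : MarkedPartition l₂ i2 t2 1) (heven : Even j) (hj : j ∈ JfinSet l₁ l₂ i1 i2 t1 t2) :
    j ∈ intervalMaxs l₁ i1 t1 0 ∨ j ∈ intervalMaxs l₂ i2 t2 1 := by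
  rw [S2.jfinSet_eq] at hj
  rcases hj with ((h | h) | h) | h
  · exact absurd (S1.mem_intervalMins_iff.1 h).1 (Nat.not_odd_iff_even.2 heven)
  · exact Or.inl h
  · exact absurd (S2.mem_intervalMins_iff.1 h).1 (Nat.not_odd_iff_even.2 heven)
  · exact Or.inr h

theorem MarkedPartition.subset_jfinSet (S2 : MarkedPartition l₂ i2 t2 1) :
    intervalMins l₁ i1 t1 0 ⊆ JfinSet l₁ l₂ i1 i2 t1 t2 ∧
      intervalMaxs l₁ i1 t1 0 ⊆ JfinSet l₁ l₂ i1 i2 t1 t2 ∧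
      intervalMins l₂ i2 t2 1 ⊆ JfinSet l₁ l₂ i1 i2 t1 t2 ∧
      intervalMaxs l₂ i2 t2 1 ⊆ JfinSet l₁ l₂ i1 i2 t1 t2 := by
  rw [S2.jfinSet_eq]
  exact ⟨fun _ h => Or.inl (Or.inl (Or.inl h)), fun _ h => Or.inl (Or.inl (Or.inr h)),
    fun _ h => Or.inl (Or.inr h), fun _ h => Or.inr h⟩

theorem mem_intervalMins_of_mem_PplusRel (S1 : MarkedPartition l₁ i1 t1 0)
    (S2 : MarkedPartition l₂ i2 t2 1) (h : j ∈ PplusRel l₁ l₂ i1 i2 t1 t2) :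
    (j ∈ intervalMins l₁ i1 t1 0 ∧ (l₂ j % 2 = 1 → j ∈ intervalMins l₂ i2 t2 1)) ∨
      (j ∈ intervalMins l₂ i2 t2 1 ∧ (l₁ j % 2 = 0 → j ∈ intervalMins l₁ i1 t1 0)) := by
  obtain ⟨hodd, J, hJ, hleast⟩ := h
  obtain ⟨-, hmax1, -, hmax2⟩ := S2.subset_jfinSet (l₁ := l₁) (i1 := i1) (t1 := t1)
  have hnot : ¬ Even j := Nat.not_even_iff_odd.2 hodd
  have hside1 (hj : j ∈ JfinSet l₁ l₂ i1 i2 t1 t2) (hp2 : l₂ j % 2 ≠ 1) :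
      j ∈ intervalMins l₁ i1 t1 0 ∧ (l₂ j % 2 = 1 → j ∈ intervalMins l₂ i2 t2 1) :=
    ⟨(mem_intervalMins_of_odd_of_mem_jfinSet S1 S2 hodd hj).resolve_right fun h =>
      hp2 (S2.mem_intervalMins_iff.1 h).2.1, fun h => absurd h hp2⟩
  have hside2 (hj : j ∈ JfinSet l₁ l₂ i1 i2 t1 t2) (hp1 : l₁ j % 2 ≠ 0) :
      j ∈ intervalMins l₂ i2 t2 1 ∧ (l₁ j % 2 = 0 → j ∈ intervalMins l₁ i1 t1 0) :=
    ⟨(mem_intervalMins_of_odd_of_mem_jfinSet S1 S2 hodd hj).resolve_left fun h =>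
      hp1 (S1.mem_intervalMins_iff.1 h).2.1, fun h => absurd h hp1⟩
  rcases hJ with ⟨j₀, hj₀, rfl⟩ | ⟨j₀, j', hj₀, -, hlt, hcons, hU, rfl⟩ | ⟨j₀, hj₀, hlast, -, rfl⟩
  · obtain rfl : j = j₀ := hleast.1
    rw [Jmin1_eq, Jmax1_eq, S2.Jmin2_eq, S2.Jmax2_eq] at hj₀
    rcases hj₀ with ⟨h1, h2⟩ | ⟨h1, -⟩
    · exact Or.inl ⟨h1, fun _ => h2⟩
    · exact absurd (S1.mem_intervalMaxs_iff.1 h1).1 hnot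
  · obtain rfl : j = j₀ := le_antisymm (hleast.2 ⟨le_rfl, hlt.le⟩) hleast.1.1
    have hnext : ∀ k ∈ JfinSet l₁ l₂ i1 i2 t1 t2, j < k → j' ≤ k :=
      fun k hk hjk => not_lt.1 fun hkj' => hcons k hjk hkj' hk
    rcases S2.uniqueSide_iff.1 hU with ⟨-, hn2⟩ | ⟨-, hn1⟩
    · exact Or.inl (hside1 hj₀ fun hp2 => hn2 (S2.covers_Icc_of_next hmax2 hodd hp2 hnext))
    · exact Or.inr (hside2 hj₀ fun hp1 => hn1 (S1.covers_Icc_of_next hmax1 hodd hp1 hnext))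
  · obtain rfl : j = j₀ := le_antisymm (hleast.2 Set.self_mem_Ici) hleast.1
    -- intervals of `λ₂` omit `0`, so none of them covers a tail `Ici j`
    exact Or.inl (hside1 hj₀ fun hp2 => S2.not_covers_Ici one_ne_zero
      (S2.covers_Ici_of_forall_le hmax2 hodd hp2 fun k hk => not_lt.1 fun hjk => hlast k hjk hk))

theorem mem_PplusRel_of_mem_intervalMins (S1 : MarkedPartition l₁ i1 t1 0)
    (S2 : MarkedPartition l₂ i2 t2 1) (hodd : Odd j)
    (h : (j ∈ intervalMins l₁ i1 t1 0 ∧ (l₂ j % 2 = 1 → j ∈ intervalMins l₂ i2 t2 1)) ∨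
      (j ∈ intervalMins l₂ i2 t2 1 ∧ (l₁ j % 2 = 0 → j ∈ intervalMins l₁ i1 t1 0))) :
    j ∈ PplusRel l₁ l₂ i1 i2 t1 t2 := by
  obtain ⟨hmin1, hmax1, hmin2, hmax2⟩ := S2.subset_jfinSet (l₁ := l₁) (i1 := i1) (t1 := t1)
  by_cases hboth : j ∈ intervalMins l₁ i1 t1 0 ∧ j ∈ intervalMins l₂ i2 t2 1
  · refine ⟨hodd, {j}, Or.inl ⟨j, Or.inl ?_, rfl⟩, isLeast_singleton⟩
    rw [Jmin1_eq, S2.Jmin2_eq]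
    exact hboth
  rcases h with ⟨h1, himp⟩ | ⟨h2, himp⟩
  · have hp1 := (S1.mem_intervalMins_iff.1 h1).2.1
    have hp2 : l₂ j % 2 ≠ 1 := fun hp2 => hboth ⟨h1, himp hp2⟩
    refine mem_PplusRel_of_uniqueSide hodd (hmin1 h1) (fun j' hjj' hnext => ?_) fun hlast => ?_
    · exact S2.uniqueSide_iff.2 (Or.inl ⟨S1.covers_Icc_of_next hmax1 hodd hp1 hnext,
        S2.not_covers hp2 (Set.left_mem_Icc.2 hjj'.le)⟩)
    · exact S2.uniqueSide_iff.2 (Or.inl ⟨S1.covers_Ici_of_forall_le hmax1 hodd hp1 hlast,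
        S2.not_covers hp2 Set.self_mem_Ici⟩)
  · have hp2 := (S2.mem_intervalMins_iff.1 h2).2.1
    have hp1 : l₁ j % 2 ≠ 0 := fun hp1 => hboth ⟨himp hp1, h2⟩
    refine mem_PplusRel_of_uniqueSide hodd (hmin2 h2) (fun j' hjj' hnext => ?_) fun hlast => ?_
    · exact S2.uniqueSide_iff.2 (Or.inr ⟨S2.covers_Icc_of_next hmax2 hodd hp2 hnext,
        S1.not_covers hp1 (Set.left_mem_Icc.2 hjj'.le)⟩)
    · exact S2.uniqueSide_iff.2 (Or.inr ⟨S2.covers_Ici_of_forall_le hmax2 hodd hp2 hlast,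
        S1.not_covers hp1 Set.self_mem_Ici⟩)

theorem mem_intervalMaxs_of_mem_PminusRel (S1 : MarkedPartition l₁ i1 t1 0)
    (S2 : MarkedPartition l₂ i2 t2 1) (hj1 : 1 ≤ j) (h : j ∈ PminusRel l₁ l₂ i1 i2 t1 t2) :
    (j ∈ intervalMaxs l₁ i1 t1 0 ∧ (l₂ j % 2 = 1 → j ∈ intervalMaxs l₂ i2 t2 1)) ∨
      (j ∈ intervalMaxs l₂ i2 t2 1 ∧ (l₁ j % 2 = 0 → j ∈ intervalMaxs l₁ i1 t1 0)) := by
  obtain ⟨heven, J, hJ, hgreatest⟩ := h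
  obtain ⟨hmin1, -, hmin2, -⟩ := S2.subset_jfinSet (l₁ := l₁) (i1 := i1) (t1 := t1)
  rcases hJ with ⟨j₀, hj₀, rfl⟩ | ⟨j₀, j', -, hj', hlt, hcons, hU, rfl⟩ | ⟨j₀, -, -, -, rfl⟩
  · obtain rfl : j = j₀ := hgreatest.1
    rw [Jmin1_eq, Jmax1_eq, S2.Jmin2_eq, S2.Jmax2_eq] at hj₀
    rcases hj₀ with ⟨h1, -⟩ | ⟨h1, h2⟩
    · exact absurd (S1.mem_intervalMins_iff.1 h1).1 (Nat.not_odd_iff_even.2 heven)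
    · exact Or.inl ⟨h1, fun _ => h2⟩
  · obtain rfl : j = j' := le_antisymm hgreatest.1.2 (hgreatest.2 ⟨hlt.le, le_rfl⟩)
    have hprev : ∀ k ∈ JfinSet l₁ l₂ i1 i2 t1 t2, k < j → k ≤ j₀ :=
      fun k hk hkj => not_lt.1 fun hj₀k => hcons k hj₀k hkj hk
    have hmax := mem_intervalMaxs_of_even_of_mem_jfinSet S1 S2 heven hj'
    rcases S2.uniqueSide_iff.1 hU with ⟨-, hn2⟩ | ⟨-, hn1⟩
    · have hp2 : l₂ j % 2 ≠ 1 := fun hp2 =>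
        hn2 (S2.covers_Icc_of_prev hmin2 heven hj1 hp2 hprev)
      exact Or.inl ⟨hmax.resolve_right fun h => hp2 (S2.mem_intervalMaxs_iff.1 h).2.2.1,
        fun h => absurd h hp2⟩
    · have hp1 : l₁ j % 2 ≠ 0 := fun hp1 =>
        hn1 (S1.covers_Icc_of_prev hmin1 heven hj1 hp1 hprev)
      exact Or.inr ⟨hmax.resolve_left fun h => hp1 (S1.mem_intervalMaxs_iff.1 h).2.2.1,
        fun h => absurd h hp1⟩
  · exact absurd (hgreatest.2 (hgreatest.1.trans j.le_succ)) j.not_succ_le_self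

theorem mem_PminusRel_of_mem_intervalMaxs (S1 : MarkedPartition l₁ i1 t1 0)
    (S2 : MarkedPartition l₂ i2 t2 1) (heven : Even j) (hj1 : 1 ≤ j)
    (h : (j ∈ intervalMaxs l₁ i1 t1 0 ∧ (l₂ j % 2 = 1 → j ∈ intervalMaxs l₂ i2 t2 1)) ∨
      (j ∈ intervalMaxs l₂ i2 t2 1 ∧ (l₁ j % 2 = 0 → j ∈ intervalMaxs l₁ i1 t1 0))) :
    j ∈ PminusRel l₁ l₂ i1 i2 t1 t2 := by
  obtain ⟨hmin1, hmax1, hmin2, hmax2⟩ := S2.subset_jfinSet (l₁ := l₁) (i1 := i1) (t1 := t1)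
  by_cases hboth : j ∈ intervalMaxs l₁ i1 t1 0 ∧ j ∈ intervalMaxs l₂ i2 t2 1
  · refine ⟨heven, {j}, Or.inl ⟨j, Or.inr ?_, rfl⟩, isGreatest_singleton⟩
    rw [Jmax1_eq, S2.Jmax2_eq]
    exact hboth
  rcases h with ⟨h1, himp⟩ | ⟨h2, himp⟩
  · have hp1 := (S1.mem_intervalMaxs_iff.1 h1).2.2.1
    have hp2 : l₂ j % 2 ≠ 1 := fun hp2 => hboth ⟨h1, himp hp2⟩
    obtain ⟨a, ha, haj, -⟩ := S1.exists_mem_intervalMins_lt heven hj1 hp1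
    refine mem_PminusRel_of_uniqueSide heven (hmax1 h1) ⟨a, hmin1 ha, haj⟩ fun j₀ hj₀ hprev => ?_
    exact S2.uniqueSide_iff.2 (Or.inl ⟨S1.covers_Icc_of_prev hmin1 heven hj1 hp1 hprev,
      S2.not_covers hp2 (Set.right_mem_Icc.2 hj₀.le)⟩)
  · have hp2 := (S2.mem_intervalMaxs_iff.1 h2).2.2.1
    have hp1 : l₁ j % 2 ≠ 0 := fun hp1 => hboth ⟨himp hp1, h2⟩
    obtain ⟨a, ha, haj, -⟩ := S2.exists_mem_intervalMins_lt heven hj1 hp2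
    refine mem_PminusRel_of_uniqueSide heven (hmax2 h2) ⟨a, hmin2 ha, haj⟩ fun j₀ hj₀ hprev => ?_
    exact S2.uniqueSide_iff.2 (Or.inr ⟨S2.covers_Icc_of_prev hmin2 heven hj1 hp2 hprev,
      S1.not_covers hp1 (Set.right_mem_Icc.2 hj₀.le)⟩)

end Relative

section Sequences

variable {l l₁ l₂ i1 i2 : ℕ → ℕ} {t1 t2 j : ℕ}

theorem sign_ite_of_not_mem_minus {P M : Set ℕ} {p : Prop} [Decidable p] (hP : j ∈ P ↔ p)
    (hM : j ∉ M) :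
    (if j ∈ P then (1 : ℤ) else if j ∈ M then -1 else 0) = if p then 1 else 0 := by
  simp only [hP, hM, if_false]

theorem sign_ite_of_not_mem_plus {P M : Set ℕ} {p : Prop} [Decidable p] (hP : j ∉ P)
    (hM : j ∈ M ↔ p) :
    (if j ∈ P then (1 : ℤ) else if j ∈ M then -1 else 0) = if p then -1 else 0 := by
  simp only [hP, hM, if_false]

theorem zSeq_of_odd (hodd : Odd j) :
    zSeq l j = if Even (l j) ∧ (j = 1 ∨ l (j - 1) > l j) then 1 else 0 :=
  sign_ite_of_not_mem_minus (by simp [Pplus, hodd]) fun h => Nat.not_even_iff_odd.2 hodd h.2.1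

theorem zSeq_of_even (heven : Even j) (hj : 1 ≤ j) :
    zSeq l j = if Even (l j) ∧ l j > l (j + 1) then -1 else 0 := by
  have : 2 ≤ j := by obtain ⟨k, rfl⟩ := heven; omega
  exact sign_ite_of_not_mem_plus (fun h => Nat.not_odd_iff_even.2 heven h.1)
    (by simp [Pminus, heven, this])

theorem zSeqO_of_odd (hodd : Odd j) :
    zSeqO l j = if Odd (l j) ∧ (j = 1 ∨ l (j - 1) > l j) then 1 else 0 :=
  sign_ite_of_not_mem_minus (by simp [PplusO, hodd]) fun h => Nat.not_even_iff_odd.2 hodd h.2.1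

theorem zSeqO_of_even (heven : Even j) (hj : 1 ≤ j) :
    zSeqO l j = if Odd (l j) ∧ l j > l (j + 1) then -1 else 0 := by
  have : 2 ≤ j := by obtain ⟨k, rfl⟩ := heven; omega
  exact sign_ite_of_not_mem_plus (fun h => Nat.not_odd_iff_even.2 heven h.1)
    (by simp [PminusO, heven, this])

theorem xiSeq_of_odd (hodd : Odd j) :
    xiSeq l₁ l₂ j = if (Even (l₁ j) ∧ Odd (l₂ j)) ∧
      ((j = 1 ∨ l₁ (j - 1) > l₁ j) ∨ (j = 1 ∨ l₂ (j - 1) > l₂ j)) then 1 else 0 :=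
  sign_ite_of_not_mem_minus
    (by simp only [Jplus, GoodIdx, Set.mem_ofPred_eq, hodd, true_and]; tauto)
    fun h => Nat.not_even_iff_odd.2 hodd h.2.1

theorem xiSeq_of_even (heven : Even j) (hj : 1 ≤ j) :
    xiSeq l₁ l₂ j = if (Even (l₁ j) ∧ Odd (l₂ j)) ∧
      (l₁ j > l₁ (j + 1) ∨ l₂ j > l₂ (j + 1)) then -1 else 0 := by
  have : 2 ≤ j := by obtain ⟨k, rfl⟩ := heven; omega
  exact sign_ite_of_not_mem_plus (fun h => Nat.not_odd_iff_even.2 heven h.1)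
    (by simp only [Jminus, GoodIdx, Set.mem_ofPred_eq, heven, this, true_and])

theorem zetaRel_of_odd (S1 : MarkedPartition l₁ i1 t1 0) (S2 : MarkedPartition l₂ i2 t2 1)
    (hodd : Odd j) : zetaRel l₁ l₂ i1 i2 t1 t2 j =
      if (Even (l₁ j) ∧ (j = 1 ∨ l₁ (j - 1) > l₁ j) ∧ (Odd (l₂ j) → j = 1 ∨ l₂ (j - 1) > l₂ j)) ∨
        (Odd (l₂ j) ∧ (j = 1 ∨ l₂ (j - 1) > l₂ j) ∧ (Even (l₁ j) → j = 1 ∨ l₁ (j - 1) > l₁ j))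
      then 1 else 0 := by
  refine sign_ite_of_not_mem_minus ?_ fun h => Nat.not_even_iff_odd.2 hodd h.1
  refine (Iff.intro (mem_intervalMins_of_mem_PplusRel S1 S2)
    (mem_PplusRel_of_mem_intervalMins S1 S2 hodd)).trans ?_
  simp only [S1.mem_intervalMins_iff, S2.mem_intervalMins_iff, hodd, true_and, Nat.even_iff,
    Nat.odd_iff]
  tauto

theorem zetaRel_of_even (S1 : MarkedPartition l₁ i1 t1 0) (S2 : MarkedPartition l₂ i2 t2 1)
    (heven : Even j) (hj : 1 ≤ j) : zetaRel l₁ l₂ i1 i2 t1 t2 j =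
      if (Even (l₁ j) ∧ l₁ j > l₁ (j + 1) ∧ (Odd (l₂ j) → l₂ j > l₂ (j + 1))) ∨
        (Odd (l₂ j) ∧ l₂ j > l₂ (j + 1) ∧ (Even (l₁ j) → l₁ j > l₁ (j + 1)))
      then -1 else 0 := by
  refine sign_ite_of_not_mem_plus (fun h => Nat.not_odd_iff_even.2 heven h.1) ?_
  refine (Iff.intro (mem_intervalMaxs_of_mem_PminusRel S1 S2 hj)
    (mem_PminusRel_of_mem_intervalMaxs S1 S2 heven hj)).trans ?_
  simp only [S1.mem_intervalMaxs_iff, S2.mem_intervalMaxs_iff, heven, hj, true_and, Nat.even_iff,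
    Nat.odd_iff]
  tauto

end Sequences

-- `A`, `B`: the parities of `λ₁`, `λ₂` at `j` are good; `C`, `D`: `λ₁`, `λ₂` descend at `j`.
theorem ite_add_ite_eq (A B C D : Prop) [Decidable A] [Decidable B] [Decidable C] [Decidable D]
    (x : ℤ) : (if A ∧ C then x else 0) + (if B ∧ D then x else 0) =
      (if (A ∧ C ∧ (B → D)) ∨ (B ∧ D ∧ (A → C)) then x else 0) +
        (if (A ∧ B) ∧ (C ∨ D) then x else 0) := by
  by_cases A <;> by_cases B <;> by_cases C <;> by_cases D <;> simp [*]

theorem zeta_endoscopic_general (l₁ l₂ i1 i2 : ℕ → ℕ) (t1 t2 : ℕ)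
    (hp1 : IsPartition l₁) (hz1 : EventuallyZero l₁)
    (hsymp1 : IsSymplectic l₁) (hspec1 : IsSpecial l₁)
    (hp2 : IsPartition l₂) (hz2 : EventuallyZero l₂)
    (horth2 : IsOrthogonal l₂) (hspec2 : IsSpecial l₂)
    (hm1 : MarkedSeq l₁ i1 t1) (hm2 : MarkedSeqO l₂ i2 t2) :
    ∀ j, 1 ≤ j →
      zSeq l₁ j + zSeqO l₂ j = zetaRel l₁ l₂ i1 i2 t1 t2 j + xiSeq l₁ l₂ j := by
  intro j hj
  have S1 := hm1.markedPartition hp1 hz1 hsymp1 hspec1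
  have S2 := hm2.markedPartition hp2 hz2 horth2 hspec2
  rcases Nat.even_or_odd j with heven | hodd
  · rw [zSeq_of_even heven hj, zSeqO_of_even heven hj, zetaRel_of_even S1 S2 heven hj,
      xiSeq_of_even heven hj]
    exact ite_add_ite_eq _ _ _ _ _
  · rw [zSeq_of_odd hodd, zSeqO_of_odd hodd, zetaRel_of_odd S1 S2 hodd, xiSeq_of_odd hodd]
    exact ite_add_ite_eq _ _ _ _ _

/-- Lemma 3.1: `ζ(λ₁) + ζ(λ₂) = ζ_{λ₁,λ₂}(λ) + ξ`. -/
theorem zeta_endoscopic (n₁ n₂ : ℕ) (l₁ l₂ i1 i2 : ℕ → ℕ) (t1 t2 : ℕ)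
    (hp1 : IsPartition l₁) (hz1 : EventuallyZero l₁) (hs1 : psum l₁ = 2 * n₁)
    (hsymp1 : IsSymplectic l₁) (hspec1 : IsSpecial l₁)
    (hp2 : IsPartition l₂) (hz2 : EventuallyZero l₂) (hs2 : psum l₂ = 2 * n₂)
    (horth2 : IsOrthogonal l₂) (hspec2 : IsSpecial l₂)
    (hm1 : MarkedSeq l₁ i1 t1) (hm2 : MarkedSeqO l₂ i2 t2) :
    ∀ j, 1 ≤ j →
      zSeq l₁ j + zSeqO l₂ j = zetaRel l₁ l₂ i1 i2 t1 t2 j + xiSeq l₁ l₂ j :=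
  zeta_endoscopic_general l₁ l₂ i1 i2 t1 t2 hp1 hz1 hsymp1 hspec1 hp2 hz2 horth2 hspec2 hm1 hm2
end
end
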